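/- arXiv:math/0611668 — 3 statements merged into one kernel-verified Lean document; each statement's English description precedes it below -/
import Mathlib

section
/- Let G be a group with a finite generating set S, let φ : G → H be a surjective group homomorphism, and consider Bernoulli bond percolation on the Cayley graph of (G,S) (edge set G × S, edge (g,s) joining g and g·s) and on the Cayley graph of H with edge set H × S, where the edge (h,s) joins h and h·φ(s). Then for every p ∈ [0,1], the expected cluster size of the identity in the Cayley graph of H is at most the expected cluster size of the identity in the Cayley graph of (G,S): E_p(|C|_H) ≤ E_p(|C|_G) (as elements of [0,∞]). -/
open MeasureTheory ENNReal

namespace Perc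

/-- Percolation configurations on the edge set `E`: each edge is `true` (open) or
`false` (closed). -/
abbrev Config (E : Type*) := E → Bool

/-- `μ` is the Bernoulli product measure `P_p` with parameter `p` on `{0,1}^E`: the measure
of every finite cylinder event is the corresponding product.  (This determines `μ` uniquely
on the product σ-algebra, since cylinders form a π-system generating it.) -/
def IsBernoulli {E : Type*} (p : ℝ) (μ : Measure (Config E)) : Prop :=
  ∀ (F : Finset E) (σ : E → Bool),
    μ {ω | ∀ e ∈ F, ω e = σ e} =
      ∏ e ∈ F, ENNReal.ofReal (if σ e then p else 1 - p)

variable {G ι : Type*} [Group G]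

/-- In the Cayley graph of `G` with edge set `G × ι`, where the edge `(a, i)` joins `a` and
`a * f i` (the function `f : ι → G` lists the generators, with multiplicity), this says that
vertices `a` and `b` are joined by some open edge of the configuration `ω`. -/
def Step (f : ι → G) (ω : Config (G × ι)) (a b : G) : Prop :=
  ∃ i : ι, (ω (a, i) = true ∧ b = a * f i) ∨ (ω (b, i) = true ∧ a = b * f i)

/-- `x` and `y` are connected by a path of open edges (`x ↔ y`). -/
def Conn (f : ι → G) (ω : Config (G × ι)) (x y : G) : Prop :=
  Relation.ReflTransGen (Step f ω) x y

/-- The open cluster `C` of the identity. -/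
def cluster (f : ι → G) (ω : Config (G × ι)) : Set G :=
  {x | Conn f ω 1 x}

/-- The percolation function `θ`: the probability that the cluster of the identity is
infinite. -/
noncomputable def theta (f : ι → G) (μ : Measure (Config (G × ι))) : ℝ :=
  (μ {ω | (cluster f ω).Infinite}).toReal

/-- The expected cluster size `χ = E(|C|) ∈ [0,∞]` (where `|C| ∈ ℕ∞` is coerced
to `ℝ≥0∞`). -/
noncomputable def chi (f : ι → G) (μ : Measure (Config (G × ι))) : ℝ≥0∞ :=
  ∫⁻ ω, ((cluster f ω).encard : ℝ≥0∞) ∂μ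

/-- The critical probability `p_c = inf {p ∈ [0,1] | θ(p) > 0}`, with the convention
`p_c = 1` if `θ` vanishes on `[0,1]`; here `μ p` is the percolation measure at
parameter `p`. -/
noncomputable def pc (f : ι → G) (μ : ℝ → Measure (Config (G × ι))) : ℝ :=
  sInf ({p | p ∈ Set.Icc (0 : ℝ) 1 ∧ 0 < theta f (μ p)} ∪ {1})

/-- The word metric on `G` with respect to the generators `f i`: the length of a shortest
word in the generators and their inverses taking `x` to `y`.  (When the generators generate
`G`, this is the graph distance in the Cayley graph.) -/
noncomputable def wdist (f : ι → G) (x y : G) : ℕ :=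
  sInf {n : ℕ | ∃ l : List G, l.length = n ∧
    (∀ g ∈ l, (∃ i, f i = g) ∨ (∃ i, (f i)⁻¹ = g)) ∧ x * l.prod = y}

/-- Schonmann's critical point
`p_exp = sup {p ∈ [0,1] | ∃ c > 0, γ > 0, ∀ x y, P_p(x ↔ y) ≤ c·exp(-γ·dist(x,y))}`. -/
noncomputable def pexp (f : ι → G) (μ : ℝ → Measure (Config (G × ι))) : ℝ :=
  sSup {p | p ∈ Set.Icc (0 : ℝ) 1 ∧ ∃ c > 0, ∃ γ > 0, ∀ x y : G,
    (μ p {ω | Conn f ω x y}).toReal ≤ c * Real.exp (-γ * (wdist f x y : ℝ))}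

/-- The walk-through function `g(p,t) = 1 - ∑_{n≥1} (1-t)^{n-1} P_p(|C| = n)` of a Cayley
graph; here `μ` is the percolation measure at parameter `p`. -/
noncomputable def wt (f : ι → G) (μ : Measure (Config (G × ι))) (t : ℝ) : ℝ :=
  1 - ∑' n : ℕ, (1 - t) ^ n * (μ {ω | (cluster f ω).encard = ((n + 1 : ℕ) : ℕ∞)}).toReal

/-- The ball of radius `j`: all products of at most `j` elements of `S ∪ S⁻¹`. -/
def ball (S : Set G) (j : ℕ) : Set G :=
  {g | ∃ l : List G, l.length ≤ j ∧ (∀ x ∈ l, x ∈ S ∨ x⁻¹ ∈ S) ∧ l.prod = g}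

/-- The Cheeger constant `h = inf_K |∂K| / |K|`, the infimum over nonempty finite vertex
sets `K` of the number of edges `(a, i)` (joining `a` and `a * f i`) with exactly one
endpoint in `K`, divided by `|K|`. -/
noncomputable def cheeger (f : ι → G) : ℝ :=
  ⨅ K : {K : Finset G // K.Nonempty},
    (Nat.card {e : G × ι // Xor' (e.1 ∈ K.1) (e.1 * f e.2 ∈ K.1)} : ℝ) / (K.1.card : ℝ)

/-- The open cluster of the identity in the subgraph induced on the vertex set `V`: only
open edges with both endpoints in `V` may be used. -/
def clusterIn (f : ι → G) (V : Set G) (ω : Config (G × ι)) : Set G :=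
  {x | Relation.ReflTransGen (fun a b => Step f ω a b ∧ a ∈ V ∧ b ∈ V) 1 x}

/-- The generators of `G` given by a generating set `S` (one edge orbit per element
of `S`). -/
def setGens (S : Set G) : S → G := Subtype.val

/-- The generators of the free product `G₁ * G₂` given by the disjoint union `S₁ ⊔ S₂` of
generating sets, embedded via the canonical monomorphisms. -/
def coprodGens {G₁ G₂ : Type*} [Group G₁] [Group G₂] (S₁ : Set G₁) (S₂ : Set G₂) :
    S₁ ⊕ S₂ → Monoid.Coprod G₁ G₂ :=
  Sum.elim (fun s => Monoid.Coprod.inl (s : G₁)) (fun s => Monoid.Coprod.inr (s : G₂))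

/-- The generators of the free product `G₁ * ⋯ * G_n` given by the disjoint union
`S₁ ⊔ ⋯ ⊔ S_n` of generating sets, embedded via the canonical monomorphisms. -/
def coprodIGens {n : ℕ} {G : Fin n → Type*} [∀ i, Group (G i)] (S : ∀ i, Set (G i)) :
    (Σ i, S i) → Monoid.CoprodI G :=
  fun x => Monoid.CoprodI.of (x.2 : G x.1)

/-- The image of a list of syllables in the free product `G₁ * G₂`. -/
def sylProd {G₁ G₂ : Type*} [Group G₁] [Group G₂] (l : List (G₁ ⊕ G₂)) :
    Monoid.Coprod G₁ G₂ :=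
  (l.map (Sum.elim (fun g => Monoid.Coprod.inl g) (fun h => Monoid.Coprod.inr h))).prod

/-- The set `P₁` of nontrivial elements of `G₁ * G₂` whose normal form begins with a
nontrivial syllable of `G₁`: elements represented by a nonempty alternating product of
nontrivial syllables, the first syllable lying in `G₁`.  (Such a representation is the
normal form, which is unique.) -/
def beginsLeft {G₁ G₂ : Type*} [Group G₁] [Group G₂] (x : Monoid.Coprod G₁ G₂) : Prop :=
  ∃ l : List (G₁ ⊕ G₂), l ≠ [] ∧ (∀ a ∈ l, a ≠ Sum.inl 1 ∧ a ≠ Sum.inr 1) ∧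
    l.Chain' (fun a b => a.isLeft ≠ b.isLeft) ∧
    (∃ g : G₁, l.head? = some (Sum.inl g)) ∧ sylProd l = x

/-- The set `P₂` of nontrivial elements of `G₁ * G₂` whose normal form begins with a
nontrivial syllable of `G₂`. -/
def beginsRight {G₁ G₂ : Type*} [Group G₁] [Group G₂] (x : Monoid.Coprod G₁ G₂) : Prop :=
  ∃ l : List (G₁ ⊕ G₂), l ≠ [] ∧ (∀ a ∈ l, a ≠ Sum.inl 1 ∧ a ≠ Sum.inr 1) ∧
    l.Chain' (fun a b => a.isLeft ≠ b.isLeft) ∧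
    (∃ h : G₂, l.head? = some (Sum.inr h)) ∧ sylProd l = x

end Perc

open Perc

/-!
Explore the open cluster of `1` in the Cayley graph of `H` one edge at a time, keeping a lift
`g ∈ φ⁻¹ x` of every reached vertex `x`, and read the state of an examined edge off the parallel
`G`-edge at the lift of a reached endpoint; an open edge then lifts the new endpoint along it.
Since which `G`-edge is read depends only on the states read before, on a finite edge set `E`
of `H` the `G`-configurations reproducing a given pattern form a cylinder of the same
probability, and distinct patterns give disjoint cylinders. Along this coupling every reached
vertex has a lift connected to `1` in `G`, so `P(h ∈ C_H) ≤ P(h ∈ φ(C_G))`; summing over `h`,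
`E|C_H| ≤ E|φ(C_G)| ≤ E|C_G|`.
-/

namespace Perc

section Connectivity

variable {V α ι : Type*}

open scoped Classical in
noncomputable def openOn (F : Finset α) : Config α := fun e => decide (e ∈ F)

noncomputable def restr (E : Finset α) (ω : Config α) : Config α :=
  openOn (E.filter fun e => ω e)

theorem restr_le (E : Finset α) (ω : Config α) : restr E ω ≤ ω := fun e => by
  rw [Bool.le_iff_imp]
  simp [restr, openOn]

theorem restr_mono {E E' : Finset α} (h : E ⊆ E') (ω : Config α) :
    restr E ω ≤ restr E' ω := fun e => by
  simp only [restr, openOn, Finset.mem_filter, decide_eq_true_eq, Bool.le_iff_imp]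
  exact fun he => ⟨h he.1, he.2⟩

theorem eq_of_openOn_eqOn {E F F' : Finset α} (hF : F ⊆ E) (hF' : F' ⊆ E)
    (h : ∀ e ∈ E, openOn F e = openOn F' e) : F = F' := by
  ext e
  by_cases he : e ∈ E
  · simpa [openOn] using h e he
  · exact iff_of_false (fun h => he (hF h)) (fun h => he (hF' h))

variable [Group V] (f : ι → V)

theorem Step.mono {ω ω' : Config (V × ι)} (hω : ω ≤ ω') {a b : V} (h : Step f ω a b) :
    Step f ω' a b := by
  obtain ⟨i, ⟨hi, rfl⟩ | ⟨hi, rfl⟩⟩ := h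
  · exact ⟨i, Or.inl ⟨Bool.le_iff_imp.mp (hω _) hi, rfl⟩⟩
  · exact ⟨i, Or.inr ⟨Bool.le_iff_imp.mp (hω _) hi, rfl⟩⟩

theorem Conn.mono {ω ω' : Config (V × ι)} (hω : ω ≤ ω') {x y : V} (h : Conn f ω x y) :
    Conn f ω' x y :=
  Relation.ReflTransGen.mono (fun _ _ => Step.mono f hω) x y h

theorem conn_mul_iff {τ : Config (V × ι)} {a : V} {i : ι} (hopen : τ (a, i) = true) (x : V) :
    Conn f τ x (a * f i) ↔ Conn f τ x a := by
  constructor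
  · exact fun h => h.tail ⟨i, Or.inr ⟨hopen, rfl⟩⟩
  · exact fun h => h.tail ⟨i, Or.inl ⟨hopen, rfl⟩⟩

theorem conn_iff_exists_restr (ω : Config (V × ι)) (x y : V) :
    Conn f ω x y ↔ ∃ E : Finset (V × ι), Conn f (restr E ω) x y := by
  classical
  refine ⟨fun h => ?_, fun ⟨E, hE⟩ => hE.mono f (restr_le E ω)⟩
  induction h with
  | refl => exact ⟨∅, .refl⟩
  | @tail b c _ hbc ih =>
    obtain ⟨E, hE⟩ := ih
    obtain ⟨i, hi⟩ := hbc
    -- the open edge used by the last step is `(b, i)` or `(c, i)`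
    refine ⟨insert (b, i) (insert (c, i) E),
      (hE.mono f (restr_mono (by grind) ω)).tail ⟨i, ?_⟩⟩
    simp only [restr, openOn, Finset.mem_filter, Finset.mem_insert, decide_eq_true_eq]
    grind

open scoped Classical in
theorem setOf_restr_eq_biUnion (E : Finset α) (Q : Config α → Prop) :
    {ω | Q (restr E ω)} =
      ⋃ F ∈ E.powerset.filter (fun F => Q (openOn F)), {ω | ∀ e ∈ E, ω e = openOn F e} := by
  ext ω
  simp only [Set.mem_ofPred_eq, Set.mem_iUnion, Finset.mem_filter, Finset.mem_powerset,
    exists_prop]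
  constructor
  · intro hQ
    refine ⟨_, ⟨Finset.filter_subset _ E, hQ⟩, fun e he => ?_⟩
    simp [openOn, he]
  · rintro ⟨F, ⟨hFE, hQ⟩, hω⟩
    have hF : E.filter (fun e => ω e) = F := by
      ext e
      have := hω e
      grind [openOn]
    rwa [restr, hF]

theorem measurableSet_cylinder {β : Type*} (L : α → β) (F : Finset α) (υ : Config α) :
    MeasurableSet {τ : Config β | ∀ e ∈ F, τ (L e) = υ e} := by
  simp only [Set.ofPred_forall]
  exact F.measurableSet_biInter fun e _ =>
    measurableSet_eq_fun (measurable_pi_apply (L e)) measurable_const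

theorem measurableSet_setOf_restr (E : Finset α) (Q : Config α → Prop) :
    MeasurableSet {ω | Q (restr E ω)} := by
  rw [setOf_restr_eq_biUnion]
  exact Finset.measurableSet_biUnion _ fun F _ => measurableSet_cylinder id E _

theorem lintegral_encard_eq_tsum {Ω : Type*} [MeasurableSpace Ω] [Countable α] (μ : Measure Ω)
    (C : Ω → Set α) (hC : ∀ v, MeasurableSet {ω | v ∈ C ω}) :
    ∫⁻ ω, ((C ω).encard : ℝ≥0∞) ∂μ = ∑' v, μ {ω | v ∈ C ω} := by
  have hsum (ω : Ω) : ((C ω).encard : ℝ≥0∞) = ∑' v, {ω | v ∈ C ω}.indicator 1 ω := by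
    rw [← ENNReal.tsum_set_one, tsum_subtype (C ω) fun _ => (1 : ℝ≥0∞)]
    rfl
  simp_rw [hsum]
  rw [lintegral_tsum fun v => (measurable_one.indicator (hC v)).aemeasurable]
  exact tsum_congr fun v => lintegral_indicator_one (hC v)

theorem setOf_conn_eq_iUnion (x y : V) :
    {ω | Conn f ω x y} = ⋃ E : Finset (V × ι), {ω | Conn f (restr E ω) x y} :=
  Set.ext fun ω => by
    simpa only [Set.mem_iUnion, Set.mem_ofPred_eq] using conn_iff_exists_restr f ω x y

variable [Countable V] [Countable ι]

theorem measurableSet_setOf_conn (x y : V) : MeasurableSet {ω | Conn f ω x y} := by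
  rw [setOf_conn_eq_iUnion]
  exact MeasurableSet.iUnion fun E => measurableSet_setOf_restr E (Conn f · x y)

theorem measure_setOf_conn_eq_iSup (μ : Measure (Config (V × ι))) (x y : V) :
    μ {ω | Conn f ω x y} = ⨆ E : Finset (V × ι), μ {ω | Conn f (restr E ω) x y} := by
  rw [setOf_conn_eq_iUnion]
  exact Monotone.measure_iUnion fun E E' h ω hω => Conn.mono f (restr_mono h ω) hω

theorem chi_eq_tsum (μ : Measure (Config (V × ι))) :
    chi f μ = ∑' x, μ {ω | x ∈ cluster f ω} :=
  lintegral_encard_eq_tsum μ _ fun x => measurableSet_setOf_conn f 1 x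

theorem measurableSet_setOf_mem_image_cluster {W : Type*} (φ : V → W) (w : W) :
    MeasurableSet {τ | w ∈ φ '' cluster f τ} := by
  have : {τ | w ∈ φ '' cluster f τ} = ⋃ x ∈ φ ⁻¹' {w}, {τ | Conn f τ 1 x} := by
    ext τ
    simp [cluster, and_comm]
  rw [this]
  exact MeasurableSet.biUnion (Set.to_countable _) fun x _ => measurableSet_setOf_conn f 1 x

end Connectivity

theorem countable_of_closure_eq_top {G : Type*} [Group G] {S : Set G} (hS : S.Countable)
    (h : Subgroup.closure S = ⊤) : Countable G := by
  have := hS.to_subtype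
  rw [FreeGroup.closure_eq_range, MonoidHom.range_eq_top] at h
  exact h.countable

theorem IsBernoulli.measure_cylinder_comp {α β : Type*} {p : ℝ} {μ : Measure (Config α)}
    {ν : Measure (Config β)} (hμ : IsBernoulli p μ) (hν : IsBernoulli p ν) {π : β → α}
    {L : α → β} (hL : Function.LeftInverse π L) (E : Finset α) (υ : Config α) :
    ν {τ | ∀ e ∈ E, τ (L e) = υ e} = μ {ω | ∀ e ∈ E, ω e = υ e} := by
  classical
  have hset : {τ : Config β | ∀ e ∈ E, τ (L e) = υ e} =
      {τ | ∀ b ∈ E.image L, τ b = υ (π b)} := by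
    ext τ
    simp [hL _]
  rw [hset, hν, hμ, Finset.prod_image fun e _ e' _ h => hL.injective h]
  simp [hL _]

/-- A stage of the exploration of the open cluster of `1` in the Cayley graph of `H`, lifted to
`G`: `lift x = some g` records that `x` has been reached, with lift `g ∈ φ⁻¹ x`, and
`edgeLift e = some a` that the edge `e` has been examined, its state being read off the
`G`-edge `(a, e.2)`. -/
structure Exploration (G H ι : Type*) where
  lift : H → Option G
  edgeLift : H × ι → Option G

namespace Exploration

open scoped Classical

variable {G H ι : Type*} [Group G] [Group H] (φ : G →* H) (f : ι → G)

def tailLift (ψ : H → Option G) (e : H × ι) : Option G :=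
  (ψ e.1).or ((ψ (e.1 * φ (f e.2))).map (· * (f e.2)⁻¹))

noncomputable def addEdge (ψ : H → Option G) (a : G) (i : ι) : H → Option G := fun x =>
  (ψ x).or (if x = φ a then some a else if x = φ (a * f i) then some (a * f i) else none)

noncomputable def init : Exploration G H ι :=
  ⟨fun x => if x = 1 then some 1 else none, fun _ => none⟩

variable (E : Finset (H × ι))

noncomputable def next (s : Exploration G H ι) : Option ((H × ι) × G) :=
  if h : ∃ p : (H × ι) × G,
      p.1 ∈ E ∧ s.edgeLift p.1 = none ∧ tailLift φ f s.lift p.1 = some p.2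
  then some h.choose else none

noncomputable def step (υ : Config (H × ι)) (s : Exploration G H ι) : Exploration G H ι :=
  match next φ f E s with
  | none => s
  | some (e, a) =>
    ⟨if υ e then addEdge φ f s.lift a e.2 else s.lift, Function.update s.edgeLift e (some a)⟩

noncomputable def run (υ : Config (H × ι)) (n : ℕ) : Exploration G H ι :=
  (step φ f E υ)^[n] init

/-- Each step examines a new edge of `E`, so this is the end of the exploration. -/
noncomputable def final (υ : Config (H × ι)) : Exploration G H ι :=
  run φ f E υ (E.card + 1)

noncomputable def liftEdge (hφ : Function.Surjective φ) (υ : Config (H × ι)) (e : H × ι) :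
    G × ι :=
  (((final φ f E υ).edgeLift e).getD (Function.surjInv hφ e.1), e.2)

def examined (s : Exploration G H ι) : Finset (H × ι) :=
  E.filter fun e => (s.edgeLift e).isSome

structure Invariant (υ : Config (H × ι)) (s : Exploration G H ι) : Prop where
  map_lift : ∀ x g, s.lift x = some g → φ g = x
  map_edgeLift : ∀ e a, s.edgeLift e = some a → φ a = e.1
  isSome_lift : ∀ e a, s.edgeLift e = some a → υ e = true →
    (s.lift e.1).isSome ∧ (s.lift (e.1 * φ (f e.2))).isSome

variable {φ f E}

section Lifts

variable {ψ : H → Option G}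

theorem isSome_tailLift {e : H × ι} :
    (tailLift φ f ψ e).isSome ↔ (ψ e.1).isSome ∨ (ψ (e.1 * φ (f e.2))).isSome := by
  simp [tailLift]

theorem tailLift_eq_some {e : H × ι} {a : G} (h : tailLift φ f ψ e = some a) :
    ψ e.1 = some a ∨ ψ (e.1 * φ (f e.2)) = some (a * f e.2) := by
  simp only [tailLift, Option.or_eq_some_iff, Option.map_eq_some_iff] at h
  rcases h with h | ⟨-, w, hw, rfl⟩
  · exact .inl h
  · exact .inr (by simpa using hw)

theorem map_tailLift (hψ : ∀ x g, ψ x = some g → φ g = x) {e : H × ι} {a : G}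
    (h : tailLift φ f ψ e = some a) : φ a = e.1 := by
  rcases tailLift_eq_some h with h | h
  · exact hψ _ _ h
  · simpa using hψ _ _ h

theorem addEdge_eq_some {a g : G} {i : ι} {x : H} (h : addEdge φ f ψ a i x = some g) :
    ψ x = some g ∨ (φ g = x ∧ (g = a ∨ g = a * f i)) := by
  simp only [addEdge, Option.or_eq_some_iff] at h
  split_ifs at h <;> grind

theorem addEdge_of_eq_some {a g : G} {i : ι} {x : H} (h : ψ x = some g) :
    addEdge φ f ψ a i x = some g := by
  simp [addEdge, h]

theorem isSome_addEdge_left (a : G) (i : ι) : (addEdge φ f ψ a i (φ a)).isSome := by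
  simp [addEdge]

theorem isSome_addEdge_right (a : G) (i : ι) :
    (addEdge φ f ψ a i (φ (a * f i))).isSome := by
  simp only [addEdge, Option.isSome_or]
  split_ifs <;> simp

end Lifts

section Step

variable {s : Exploration G H ι} {υ υ' : Config (H × ι)} {e : H × ι} {a : G}

theorem next_eq_some (h : next φ f E s = some (e, a)) :
    e ∈ E ∧ s.edgeLift e = none ∧ tailLift φ f s.lift e = some a := by
  unfold next at h
  split_ifs at h with hex
  have := hex.choose_spec
  rwa [Option.some_injective _ h] at this

theorem tailLift_eq_none_of_next (h : next φ f E s = none) (he : e ∈ E)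
    (hs : s.edgeLift e = none) : tailLift φ f s.lift e = none := by
  unfold next at h
  split_ifs at h with hex
  exact Option.eq_none_iff_forall_ne_some.mpr fun a ha => hex ⟨(e, a), he, hs, ha⟩

theorem step_of_next_none (h : next φ f E s = none) : step φ f E υ s = s := by
  simp [step, h]

theorem step_of_next_some (h : next φ f E s = some (e, a)) :
    step φ f E υ s = ⟨if υ e then addEdge φ f s.lift a e.2 else s.lift,
      Function.update s.edgeLift e (some a)⟩ := by
  simp [step, h]

theorem lift_step {x : H} {g : G} (h : s.lift x = some g) : (step φ f E υ s).lift x = some g := by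
  cases hn : next φ f E s with
  | none => rwa [step_of_next_none hn]
  | some p =>
    rw [step_of_next_some hn]
    split_ifs
    exacts [addEdge_of_eq_some h, h]

theorem edgeLift_step {e' : H × ι} (h : s.edgeLift e' = some a) :
    (step φ f E υ s).edgeLift e' = some a := by
  cases hn : next φ f E s with
  | none => rwa [step_of_next_none hn]
  | some p =>
    have hne : e' ≠ p.1 := fun hep => by simp [hep, (next_eq_some hn).2.1] at h
    simp [step_of_next_some hn, hne, h]

theorem step_congr (h : ∀ e a, next φ f E s = some (e, a) → υ e = υ' e) :
    step φ f E υ s = step φ f E υ' s := by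
  cases hn : next φ f E s with
  | none => rw [step_of_next_none hn, step_of_next_none hn]
  | some p => rw [step_of_next_some hn, step_of_next_some hn, h _ _ hn]

theorem card_examined_step (h : next φ f E s = some (e, a)) :
    (examined E (step φ f E υ s)).card = (examined E s).card + 1 := by
  obtain ⟨he, hs, -⟩ := next_eq_some h
  have : examined E (step φ f E υ s) = insert e (examined E s) := by
    ext e'
    by_cases he' : e' = e <;> simp [examined, step_of_next_some h, Function.update_apply, he', he]
  rw [this, Finset.card_insert_of_notMem (by simp [examined, hs])]

theorem isSome_lift_step {x : H} (h : (s.lift x).isSome) :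
    ((step φ f E υ s).lift x).isSome := by
  obtain ⟨g, hg⟩ := Option.isSome_iff_exists.mp h
  simp [lift_step hg]

theorem Invariant.step (hs : Invariant φ f υ s) : Invariant φ f υ (step φ f E υ s) := by
  cases hn : next φ f E s with
  | none => rwa [step_of_next_none hn]
  | some p =>
    obtain ⟨e, a⟩ := p
    obtain ⟨-, hnone, ha⟩ := next_eq_some hn
    have hae : φ a = e.1 := map_tailLift hs.map_lift ha
    refine ⟨fun x g hg => ?_, fun e' a' h' => ?_, fun e' a' h' hυ => ?_⟩
    · rw [step_of_next_some hn] at hg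
      split_ifs at hg
      · rcases addEdge_eq_some hg with h | ⟨h, -⟩
        exacts [hs.map_lift _ _ h, h]
      · exact hs.map_lift _ _ hg
    · rw [step_of_next_some hn] at h'
      by_cases he' : e' = e
      · subst he'
        simp only [Function.update_self, Option.some.injEq] at h'
        exact h' ▸ hae
      · exact hs.map_edgeLift _ _ (by simpa [he'] using h')
    · by_cases he' : e' = e
      · subst he'
        rw [step_of_next_some hn]
        simp only [hυ, if_true, ← hae, ← map_mul]
        exact ⟨isSome_addEdge_left a _, isSome_addEdge_right a _⟩
      · rw [step_of_next_some hn] at h'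
        have := hs.isSome_lift e' a' (by simpa [he'] using h') hυ
        exact ⟨isSome_lift_step this.1, isSome_lift_step this.2⟩

end Step

section Run

variable {υ υ' : Config (H × ι)} {e : H × ι} {a : G}

theorem run_succ (υ : Config (H × ι)) (n : ℕ) :
    run φ f E υ (n + 1) = step φ f E υ (run φ f E υ n) :=
  Function.iterate_succ_apply' _ _ _

theorem lift_init : (init : Exploration G H ι).lift 1 = some 1 := by
  simp [init]

theorem invariant_init : Invariant φ f υ init := by
  refine ⟨fun x g h => ?_, fun _ _ h => by simp [init] at h, fun _ _ h => by simp [init] at h⟩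
  simp only [init] at h
  split_ifs at h with hx
  cases h
  simp [hx]

theorem invariant_run (υ : Config (H × ι)) (n : ℕ) : Invariant φ f υ (run φ f E υ n) := by
  induction n with
  | zero => exact invariant_init
  | succ n ih => rw [run_succ]; exact ih.step

theorem lift_run_mono {m n : ℕ} (hmn : m ≤ n) {x : H} {g : G}
    (h : (run φ f E υ m).lift x = some g) : (run φ f E υ n).lift x = some g := by
  induction n, hmn using Nat.le_induction with
  | base => exact h
  | succ n _ ih => rw [run_succ]; exact lift_step ih

theorem edgeLift_run_mono {m n : ℕ} (hmn : m ≤ n)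
    (h : (run φ f E υ m).edgeLift e = some a) : (run φ f E υ n).edgeLift e = some a := by
  induction n, hmn using Nat.le_induction with
  | base => exact h
  | succ n _ ih => rw [run_succ]; exact edgeLift_step ih

theorem edgeLift_final_of_next {n : ℕ} (hn : n < E.card + 1)
    (h : next φ f E (run φ f E υ n) = some (e, a)) : (final φ f E υ).edgeLift e = some a :=
  edgeLift_run_mono hn (by simp [run_succ, step_of_next_some h])

theorem le_card_examined_run (n : ℕ) (h : next φ f E (run φ f E υ n) ≠ none) :
    n ≤ (examined E (run φ f E υ n)).card := by
  induction n with
  | zero => exact Nat.zero_le _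
  | succ n ih =>
    cases hn : next φ f E (run φ f E υ n) with
    | none => rw [run_succ, step_of_next_none hn] at h; exact absurd hn h
    | some p =>
      rw [run_succ, card_examined_step hn]
      exact Nat.succ_le_succ (ih (by simp [hn]))

theorem next_final (υ : Config (H × ι)) : next φ f E (final φ f E υ) = none := by
  by_contra h
  have := le_card_examined_run _ h
  have := Finset.card_filter_le E fun e => ((final φ f E υ).edgeLift e).isSome
  unfold examined final at *
  omega

theorem leftInverse_liftEdge (hφ : Function.Surjective φ) (υ : Config (H × ι)) :
    Function.LeftInverse (fun b : G × ι => (φ b.1, b.2)) (liftEdge φ f E hφ υ) := by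
  intro e
  cases h : (final φ f E υ).edgeLift e with
  | none => simp [liftEdge, h, Function.surjInv_eq hφ]
  | some a => simp [liftEdge, h, (invariant_run υ _).map_edgeLift e a h]

end Run

section Coupling

variable {υ υ' : Config (H × ι)} {τ : Config (G × ι)} (hφ : Function.Surjective φ)

theorem conn_of_lift_final (hτ : ∀ e ∈ E, τ (liftEdge φ f E hφ υ e) = υ e) {x : H} {g : G}
    (hg : (final φ f E υ).lift x = some g) : Conn f τ 1 g := by
  suffices ∀ n ≤ E.card + 1, ∀ x g, (run φ f E υ n).lift x = some g → Conn f τ 1 g from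
    this _ le_rfl x g hg
  intro n
  induction n with
  | zero =>
    intro _ x g hg
    simp only [run, Function.iterate_zero, id_eq, init] at hg
    split_ifs at hg
    cases hg
    exact .refl
  | succ n ih =>
    intro hn x g hg
    replace ih := ih (by omega)
    rw [run_succ] at hg
    cases hnext : next φ f E (run φ f E υ n) with
    | none => rw [step_of_next_none hnext] at hg; exact ih x g hg
    | some p =>
      obtain ⟨e, a⟩ := p
      obtain ⟨he, -, ha⟩ := next_eq_some hnext
      have hτe : τ (a, e.2) = υ e := by
        simpa [liftEdge, edgeLift_final_of_next hn hnext] using hτ e he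
      rw [step_of_next_some hnext] at hg
      split_ifs at hg with hυ
      · have hopen := hτe.trans hυ
        have hconn : Conn f τ 1 a := by
          rcases tailLift_eq_some ha with h | h
          · exact ih _ _ h
          · exact (conn_mul_iff f hopen 1).mp (ih _ _ h)
        rcases addEdge_eq_some hg with h | ⟨-, rfl | rfl⟩
        · exact ih _ _ h
        · exact hconn
        · exact (conn_mul_iff f hopen 1).mpr hconn
      · exact ih x g hg

theorem isSome_lift_final_of_open {e : H × ι} (he : e ∈ E) (hυ : υ e = true)
    (h : ((final φ f E υ).lift e.1).isSome ∨
      ((final φ f E υ).lift (e.1 * φ (f e.2))).isSome) :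
    ((final φ f E υ).lift e.1).isSome ∧ ((final φ f E υ).lift (e.1 * φ (f e.2))).isSome := by
  cases hs : (final φ f E υ).edgeLift e with
  | none =>
    rw [← isSome_tailLift, tailLift_eq_none_of_next (next_final υ) he hs] at h
    simp at h
  | some a => exact (invariant_run υ _).isSome_lift e a hs hυ

theorem isSome_lift_final (hυ : ∀ e, υ e = true → e ∈ E) {h : H}
    (hc : Conn (fun i => φ (f i)) υ 1 h) : ((final φ f E υ).lift h).isSome := by
  induction hc with
  | refl => simp [final, lift_run_mono (Nat.zero_le _) lift_init]
  | tail _ hbc ih =>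
    obtain ⟨i, ⟨hopen, rfl⟩ | ⟨hopen, rfl⟩⟩ := hbc
    · exact (isSome_lift_final_of_open (hυ _ hopen) hopen (.inl ih)).2
    · exact (isSome_lift_final_of_open (hυ _ hopen) hopen (.inr ih)).1

theorem mem_image_cluster (hυ : ∀ e, υ e = true → e ∈ E) {h : H}
    (hc : Conn (fun i => φ (f i)) υ 1 h) (hτ : ∀ e ∈ E, τ (liftEdge φ f E hφ υ e) = υ e) :
    h ∈ φ '' cluster f τ := by
  obtain ⟨g, hg⟩ := Option.isSome_iff_exists.mp (isSome_lift_final hυ hc)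
  exact ⟨g, conn_of_lift_final hφ hτ hg, (invariant_run υ _).map_lift _ _ hg⟩

theorem eqOn_of_liftEdge (hτ : ∀ e ∈ E, τ (liftEdge φ f E hφ υ e) = υ e)
    (hτ' : ∀ e ∈ E, τ (liftEdge φ f E hφ υ' e) = υ' e) : ∀ e ∈ E, υ e = υ' e := by
  have hrun : ∀ n ≤ E.card + 1, run φ f E υ n = run φ f E υ' n := by
    intro n
    induction n with
    | zero => exact fun _ => rfl
    | succ n ih =>
      intro hn
      replace ih := ih (by omega)
      rw [run_succ, run_succ, ← ih]
      refine step_congr fun e a hnext => ?_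
      have he := (next_eq_some hnext).1
      rw [← hτ e he, ← hτ' e he, liftEdge, liftEdge, edgeLift_final_of_next hn hnext,
        edgeLift_final_of_next hn (ih ▸ hnext)]
  have hfinal : final φ f E υ = final φ f E υ' := hrun _ le_rfl
  intro e he
  rw [← hτ e he, ← hτ' e he, liftEdge, liftEdge, hfinal]

end Coupling

end Exploration

variable {G H ι : Type*} [Group G] [Group H] {φ : G →* H} (f : ι → G)
  {μG : Measure (Config (G × ι))} {μH : Measure (Config (H × ι))} {p : ℝ}

open Exploration in
theorem measure_setOf_conn_restr_le (hφ : Function.Surjective φ) (hμG : IsBernoulli p μG)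
    (hμH : IsBernoulli p μH) (E : Finset (H × ι)) (h : H) :
    μH {ω | Conn (fun i => φ (f i)) (restr E ω) 1 h} ≤ μG {τ | h ∈ φ '' cluster f τ} := by
  classical
  set P := E.powerset.filter fun F => Conn (fun i => φ (f i)) (openOn F) 1 h
  let L (F : Finset (H × ι)) : Set (Config (G × ι)) :=
    {τ | ∀ e ∈ E, τ (liftEdge φ f E hφ (openOn F) e) = openOn F e}
  have hdisj : Set.PairwiseDisjoint P L := fun F hF F' hF' hne =>
    Set.disjoint_left.mpr fun τ hτ hτ' => hne <|
      eq_of_openOn_eqOn (Finset.mem_powerset.mp (Finset.mem_filter.mp hF).1)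
        (Finset.mem_powerset.mp (Finset.mem_filter.mp hF').1) (eqOn_of_liftEdge hφ hτ hτ')
  calc μH {ω | Conn (fun i => φ (f i)) (restr E ω) 1 h}
      = μH (⋃ F ∈ P, {ω | ∀ e ∈ E, ω e = openOn F e}) := by
        rw [setOf_restr_eq_biUnion E (Conn (fun i => φ (f i)) · 1 h)]
    _ ≤ ∑ F ∈ P, μH {ω | ∀ e ∈ E, ω e = openOn F e} := measure_biUnion_finset_le _ _
    _ = ∑ F ∈ P, μG (L F) := Finset.sum_congr rfl fun F _ =>
        (hμH.measure_cylinder_comp hμG (leftInverse_liftEdge hφ _) E _).symm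
    _ = μG (⋃ F ∈ P, L F) :=
        (measure_biUnion_finset hdisj fun F _ => measurableSet_cylinder _ E _).symm
    _ ≤ μG {τ | h ∈ φ '' cluster f τ} := by
        refine measure_mono (Set.iUnion₂_subset fun F hF τ hτ => ?_)
        obtain ⟨hFE, hc⟩ := Finset.mem_filter.mp hF
        refine mem_image_cluster hφ (fun e he => ?_) hc hτ
        exact Finset.mem_powerset.mp hFE (by simpa [openOn] using he)

variable [Countable G] [Countable ι]

theorem measure_mem_cluster_le (hφ : Function.Surjective φ) (hμG : IsBernoulli p μG)
    (hμH : IsBernoulli p μH) (h : H) :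
    μH {ω | h ∈ cluster (fun i => φ (f i)) ω} ≤ μG {τ | h ∈ φ '' cluster f τ} := by
  have : Countable H := hφ.countable
  rw [show {ω | h ∈ cluster _ ω} = {ω | Conn (fun i => φ (f i)) ω 1 h} from rfl,
    measure_setOf_conn_eq_iSup]
  exact iSup_le fun E => measure_setOf_conn_restr_le f hφ hμG hμH E h

end Perc

theorem expected_cluster_size_quotient_le_general
    {G H : Type*} [Group G] [Group H]
    (S : Set G) (hfin : S.Finite) (hgen : Subgroup.closure S = ⊤)
    (φ : G →* H) (hφ : Function.Surjective φ)
    (p : ℝ)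
    (μG : Measure (Config (G × S))) (μH : Measure (Config (H × S)))
    (hμG : IsBernoulli p μG) (hμH : IsBernoulli p μH) :
    chi (fun s : S => φ (s : G)) μH ≤ chi (setGens S) μG := by
  have : Countable S := hfin.countable.to_subtype
  have : Countable G := countable_of_closure_eq_top hfin.countable hgen
  have : Countable H := hφ.countable
  calc chi (fun s : S => φ (s : G)) μH
      = ∑' h, μH {ω | h ∈ cluster (fun s : S => φ (s : G)) ω} := chi_eq_tsum _ μH
    _ ≤ ∑' h, μG {τ | h ∈ φ '' cluster (setGens S) τ} :=
        ENNReal.tsum_le_tsum fun h => measure_mem_cluster_le (setGens S) hφ hμG hμH h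
    _ = ∫⁻ τ, ((φ '' cluster (setGens S) τ).encard : ℝ≥0∞) ∂μG :=
        (lintegral_encard_eq_tsum μG _ (measurableSet_setOf_mem_image_cluster _ φ)).symm
    _ ≤ chi (setGens S) μG :=
        lintegral_mono fun τ => ENat.toENNReal_le.mpr (Set.encard_image_le φ _)

/-- For a surjective homomorphism `φ : G → H` and a finite generating
set `S` of `G`, the expected cluster size of the identity in the Cayley graph of `H` with
edge set `H × S` (the edge `(h,s)` joining `h` and `h·φ(s)`) is at most that in the
Cayley graph of `(G,S)`, for every `p ∈ [0,1]`. -/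
theorem expected_cluster_size_quotient_le
    {G H : Type*} [Group G] [Group H]
    (S : Set G) (hfin : S.Finite) (hgen : Subgroup.closure S = ⊤)
    (φ : G →* H) (hφ : Function.Surjective φ)
    (p : ℝ) (hp : p ∈ Set.Icc (0 : ℝ) 1)
    (μG : Measure (Config (G × S))) (μH : Measure (Config (H × S)))
    (hμG : IsBernoulli p μG) (hμH : IsBernoulli p μH) :
    chi (fun s : S => φ (s : G)) μH ≤ chi (setGens S) μG :=
  expected_cluster_size_quotient_le_general S hfin hgen φ hφ p μG μH hμG hμH
end

section
/- Let G₁ and G₂ be nontrivial finitely generated groups with finite generating sets S₁ and S₂, and consider Bernoulli bond percolation on the Cayley graph of G₁*G₂ with respect to S₁ ⊔ S₂. Let P₁ be the set of nontrivial elements of G₁*G₂ whose normal form begins with a nontrivial syllable of G₁, and P₂ similarly for G₂; let A(p) (resp. B(p)) be the P_p-probability that the cluster of the identity e in the subgraph using only open edges with both endpoints in {e} ∪ P₁ (resp. {e} ∪ P₂) is infinite. Then for every p ∈ [0,1], the percolation function satisfies θ(p) = A(p) + B(p) − A(p)·B(p). -/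
open MeasureTheory ENNReal

open Perc

/-!
Right multiplication by a syllable only changes the last syllable of a normal form, so every
edge of the Cayley graph of `G₁ ∗ G₂` joins two vertices of `V₁ = {e} ∪ P₁` or two vertices of
`V₂ = {e} ∪ P₂`, and `V₁ ∩ V₂ = {e}` by uniqueness of normal forms. An open path from `e` can
therefore pass from `V₁` to `V₂` only through `e`, so the cluster of `e` is the union of its
clusters inside `V₁` and inside `V₂`, and it is infinite iff one of them is. These two events are
determined by disjoint sets of edges, hence independent under the product measure, and
inclusion–exclusion gives `θ = A + B - A·B`.
-/

namespace Perc

open Monoid ProbabilityTheory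

section Clusters

variable {G ι : Type*} [Group G] (f : ι → G) (ω : Config (G × ι))

theorem clusterIn_subset {V : Set G} (hV : 1 ∈ V) : clusterIn f V ω ⊆ V := by
  intro x hx
  rcases Relation.ReflTransGen.cases_tail hx with rfl | ⟨_, _, -, -, hx⟩
  exacts [hV, hx]

theorem clusterIn_subset_cluster (V : Set G) : clusterIn f V ω ⊆ cluster f ω :=
  fun x hx => Relation.ReflTransGen.mono (fun _ _ h => h.1) 1 x hx

theorem mem_clusterIn_of_mem_union {V W : Set G} (hW : 1 ∈ W) (hVW : V ∩ W ⊆ {1}) {b : G}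
    (hbV : b ∈ V) (hb : b ∈ clusterIn f V ω ∪ clusterIn f W ω) : b ∈ clusterIn f V ω := by
  rcases hb with hb | hb
  · exact hb
  · obtain rfl : b = 1 := hVW ⟨hbV, clusterIn_subset f ω hW hb⟩
    exact .refl

/-- An open path leaving `V₁` must pass through `V₁ ∩ V₂ = {1}`, where it can restart in `V₂`. -/
theorem cluster_eq_union_clusterIn {V₁ V₂ : Set G} (h₁ : 1 ∈ V₁) (h₂ : 1 ∈ V₂)
    (hV : V₁ ∩ V₂ ⊆ {1}) (hedge : ∀ a i, (a ∈ V₁ ∧ a * f i ∈ V₁) ∨ (a ∈ V₂ ∧ a * f i ∈ V₂)) :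
    cluster f ω = clusterIn f V₁ ω ∪ clusterIn f V₂ ω := by
  refine subset_antisymm (fun x hx => ?_)
    (Set.union_subset (clusterIn_subset_cluster f ω V₁) (clusterIn_subset_cluster f ω V₂))
  induction hx with
  | refl => exact Or.inl .refl
  | @tail b c _ hbc ih =>
    have hbc' : (b ∈ V₁ ∧ c ∈ V₁) ∨ (b ∈ V₂ ∧ c ∈ V₂) := by
      obtain ⟨i, ⟨-, rfl⟩ | ⟨-, rfl⟩⟩ := hbc
      exacts [hedge b i, (hedge c i).imp And.symm And.symm]
    rcases hbc' with ⟨hb, hc⟩ | ⟨hb, hc⟩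
    · exact Or.inl ((mem_clusterIn_of_mem_union f ω h₂ hV hb ih).tail ⟨hbc, hb, hc⟩)
    · exact Or.inr ((mem_clusterIn_of_mem_union f ω h₁ (Set.inter_comm V₁ V₂ ▸ hV) hb
        ih.symm).tail ⟨hbc, hb, hc⟩)

theorem clusterIn_subset_range_lift (V : Set G) :
    clusterIn f V ω ⊆ Set.range (FreeGroup.lift f) := by
  intro x hx
  change x ∈ (FreeGroup.lift f).range
  induction hx with
  | refl => exact one_mem _
  | @tail b c _ hbc ih =>
    have hf (i : ι) : f i ∈ (FreeGroup.lift f).range := ⟨FreeGroup.of i, FreeGroup.lift_apply_of⟩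
    obtain ⟨⟨i, ⟨-, rfl⟩ | ⟨-, rfl⟩⟩, -⟩ := hbc
    · exact mul_mem ih (hf i)
    · simpa using mul_mem ih (inv_mem (hf i))

end Clusters

section Measurability

variable {Ω α : Type*} {m : MeasurableSpace Ω}

def reachWithin (r : α → α → Prop) (x : α) : ℕ → Set α
  | 0 => {x}
  | n + 1 => reachWithin r x n ∪ {b | ∃ a ∈ reachWithin r x n, r a b}

theorem reflTransGen_iff_exists_mem_reachWithin {r : α → α → Prop} {x y : α} :
    Relation.ReflTransGen r x y ↔ ∃ n, y ∈ reachWithin r x n := by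
  constructor
  · intro h
    induction h with
    | refl => exact ⟨0, rfl⟩
    | tail _ hbc ih =>
      obtain ⟨n, hn⟩ := ih
      exact ⟨n + 1, Or.inr ⟨_, hn, hbc⟩⟩
  · rintro ⟨n, hn⟩
    induction n generalizing y with
    | zero => exact hn ▸ .refl
    | succ n ih =>
      rcases hn with hn | ⟨a, ha, hay⟩
      exacts [ih hn, (ih ha).tail hay]

theorem measurableSet_setOf_reflTransGen {R : Ω → α → α → Prop} (pred : α → Set α)
    (hpred : ∀ b, (pred b).Countable) (hR_pred : ∀ ω a b, a ≠ b → R ω a b → a ∈ pred b)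
    (hR : ∀ a b, a ≠ b → MeasurableSet {ω | R ω a b}) (x y : α) :
    MeasurableSet {ω | Relation.ReflTransGen (R ω) x y} := by
  simp_rw [reflTransGen_iff_exists_mem_reachWithin, Set.ofPred_exists]
  refine .iUnion fun n => ?_
  induction n generalizing y with
  | zero => exact .const _
  | succ n ih =>
    have hstep (a : α) : MeasurableSet {ω | a ≠ y ∧ R ω a y} := by
      by_cases hay : a = y
      · simp [hay]
      · simpa [hay] using hR a y hay
    have : {ω | y ∈ reachWithin (R ω) x (n + 1)} =
        {ω | y ∈ reachWithin (R ω) x n} ∪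
          ⋃ a ∈ pred y, {ω | a ∈ reachWithin (R ω) x n} ∩ {ω | a ≠ y ∧ R ω a y} := by
      ext ω
      simp only [reachWithin, Set.mem_union, Set.mem_ofPred_eq, Set.mem_iUnion, Set.mem_inter_iff,
        exists_prop]
      constructor
      · rintro (hy | ⟨a, ha, hay⟩)
        · exact Or.inl hy
        · by_cases h : a = y
          · exact Or.inl (h ▸ ha)
          · exact Or.inr ⟨a, hR_pred ω a y h hay, ha, h, hay⟩
      · rintro (hy | ⟨a, -, ha, -, hay⟩)
        exacts [Or.inl hy, Or.inr ⟨a, ha, hay⟩]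
    rw [this]
    exact (ih y).union (.biUnion (hpred y) fun a _ => (ih a).inter (hstep a))

theorem measurableSet_setOf_infinite {s : Ω → Set α} {C : Set α} (hC : C.Countable)
    (hsC : ∀ ω, s ω ⊆ C) (hs : ∀ x, MeasurableSet {ω | x ∈ s ω}) :
    MeasurableSet {ω | (s ω).Infinite} := by
  have := hC.to_subtype
  have : {ω | (s ω).Infinite} = ⋂ F : Finset C, ⋃ x : C, {ω | x ∉ F ∧ ↑x ∈ s ω} := by
    ext ω
    simp only [Set.mem_ofPred_eq, Set.mem_iInter, Set.mem_iUnion]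
    constructor
    · intro hinf F
      by_contra! hF
      refine hinf ((F.finite_toSet.image Subtype.val).subset fun y hy => ?_)
      exact ⟨⟨y, hsC ω hy⟩, by_contra fun h => hF _ h hy, rfl⟩
    · intro h hfin
      obtain ⟨x, hxF, hx⟩ := h (hfin.preimage Subtype.val_injective.injOn).toFinset
      exact hxF (by simpa using hx)
  rw [this]
  exact .iInter fun F => .iUnion fun x => (MeasurableSet.const _).inter (hs x)

end Measurability

section Independence

variable {E : Type*}

abbrev coordSigma (D : Set E) : MeasurableSpace (Config E) :=
  ⨆ e ∈ D, MeasurableSpace.comap (fun ω => ω e) inferInstance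

theorem coordSigma_le (D : Set E) : coordSigma D ≤ MeasurableSpace.pi :=
  iSup₂_le fun e _ => (measurable_pi_apply e).comap_le

theorem measurableSet_coordSigma {D : Set E} {e : E} (he : e ∈ D) (b : Bool) :
    MeasurableSet[coordSigma D] {ω | ω e = b} :=
  le_iSup₂ (f := fun e (_ : e ∈ D) => MeasurableSpace.comap (fun ω : Config E => ω e) inferInstance)
    e he _ ⟨{b}, measurableSet_singleton b, rfl⟩

variable {p : ℝ} {μ : Measure (Config E)}

theorem IsBernoulli.isProbabilityMeasure (hμ : IsBernoulli p μ) : IsProbabilityMeasure μ :=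
  ⟨by simpa using hμ ∅ fun _ => true⟩

theorem IsBernoulli.iIndep (hμ : IsBernoulli p μ) :
    iIndep (fun e => MeasurableSpace.comap (fun ω : Config E => ω e) inferInstance) μ := by
  refine iIndepSets.iIndep (fun e => (measurable_pi_apply e).comap_le)
    (fun e => {A | ∃ b, A = {ω : Config E | ω e = b}}) ?_ ?_ ?_
  · rintro e _ ⟨b, rfl⟩ _ ⟨b', rfl⟩ ⟨ω, hω, hω'⟩
    obtain rfl : b = b' := hω.symm.trans hω'
    exact ⟨b, Set.inter_self _⟩
  · intro e
    refine le_antisymm ?_ (MeasurableSpace.generateFrom_le ?_)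
    · rintro _ ⟨B, -, rfl⟩
      have : (fun ω : Config E => ω e) ⁻¹' B = ⋃ b ∈ B, {ω | ω e = b} := by ext; simp
      rw [this]
      exact .biUnion B.to_countable fun b _ => MeasurableSpace.measurableSet_generateFrom ⟨b, rfl⟩
    · rintro _ ⟨b, rfl⟩
      exact ⟨{b}, measurableSet_singleton b, rfl⟩
  · rw [iIndepSets_iff]
    intro S A hA
    choose! b hb using hA
    have hsingle (e : E) : μ {ω | ω e = b e} = ENNReal.ofReal (if b e then p else 1 - p) := by
      simpa using hμ {e} b
    rw [Finset.prod_congr rfl fun e he => (hb e he).symm ▸ hsingle e, ← hμ S b]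
    congr 1
    ext ω
    simp +contextual [hb]

theorem IsBernoulli.indep_coordSigma (hμ : IsBernoulli p μ) {D₁ D₂ : Set E}
    (hD : Disjoint D₁ D₂) : Indep (coordSigma D₁) (coordSigma D₂) μ :=
  indep_iSup_of_disjoint (fun e => (measurable_pi_apply e).comap_le) hμ.iIndep hD

end Independence

section Splitting

variable {G ι : Type*} [Group G] (f : ι → G)

/-- Loops are excluded: they never matter for connectivity, and a loop at `1` would belong to
both halves of the splitting below. -/
def edgesIn (V : Set G) : Set (G × ι) :=
  {e | e.1 ∈ V ∧ e.1 * f e.2 ∈ V ∧ e.1 * f e.2 ≠ e.1}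

theorem disjoint_edgesIn {V₁ V₂ : Set G} (hV : V₁ ∩ V₂ ⊆ {1}) :
    Disjoint (edgesIn f V₁) (edgesIn f V₂) := by
  rw [Set.disjoint_left]
  rintro ⟨a, i⟩ ⟨ha₁, hb₁, hab⟩ ⟨ha₂, hb₂, -⟩
  exact hab ((hV ⟨hb₁, hb₂⟩ : a * f i = 1).trans (hV ⟨ha₁, ha₂⟩ : a = 1).symm)

theorem measurableSet_coordSigma_edgesIn_and {V : Set G} {e : G × ι} {P : Prop}
    (h : P → e ∈ edgesIn f V) : MeasurableSet[coordSigma (edgesIn f V)] {ω | ω e = true ∧ P} := by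
  by_cases hP : P
  · simpa [hP] using measurableSet_coordSigma (h hP) true
  · simp [hP]

theorem measurableSet_clusterIn_infinite [Countable ι] (V : Set G) :
    MeasurableSet[coordSigma (edgesIn f V)] {ω | (clusterIn f V ω).Infinite} := by
  refine measurableSet_setOf_infinite (Set.countable_range _)
    (clusterIn_subset_range_lift f · V) fun x => ?_
  refine measurableSet_setOf_reflTransGen
    (fun b => Set.range (fun i => b * (f i)⁻¹) ∪ Set.range (fun i => b * f i))
    (fun b => (Set.countable_range _).union (Set.countable_range _)) ?_ ?_ 1 x
  · rintro ω a b - ⟨⟨i, ⟨-, rfl⟩ | ⟨-, rfl⟩⟩, -⟩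
    exacts [Or.inl ⟨i, by simp⟩, Or.inr ⟨i, rfl⟩]
  · intro a b hab
    have : {ω : Config (G × ι) | Step f ω a b ∧ a ∈ V ∧ b ∈ V} =
        ⋃ i, {ω | ω (a, i) = true ∧ (b = a * f i ∧ a ∈ V ∧ b ∈ V)} ∪
          {ω | ω (b, i) = true ∧ (a = b * f i ∧ a ∈ V ∧ b ∈ V)} := by
      ext ω
      simp only [Step, Set.mem_ofPred_eq, Set.mem_iUnion, Set.mem_union]
      grind
    rw [this]
    refine .iUnion fun i => .union (measurableSet_coordSigma_edgesIn_and f ?_)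
      (measurableSet_coordSigma_edgesIn_and f ?_)
    · rintro ⟨rfl, ha, hb⟩
      exact ⟨ha, hb, Ne.symm hab⟩
    · rintro ⟨rfl, ha, hb⟩
      exact ⟨hb, ha, hab⟩

theorem theta_eq_of_split [Countable ι] {p : ℝ} {μ : Measure (Config (G × ι))}
    (hμ : IsBernoulli p μ) {V₁ V₂ : Set G} (h₁ : 1 ∈ V₁) (h₂ : 1 ∈ V₂) (hV : V₁ ∩ V₂ ⊆ {1})
    (hedge : ∀ a i, (a ∈ V₁ ∧ a * f i ∈ V₁) ∨ (a ∈ V₂ ∧ a * f i ∈ V₂)) :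
    theta f μ = μ.real {ω | (clusterIn f V₁ ω).Infinite} + μ.real {ω | (clusterIn f V₂ ω).Infinite}
      - μ.real {ω | (clusterIn f V₁ ω).Infinite} * μ.real {ω | (clusterIn f V₂ ω).Infinite} := by
  have := hμ.isProbabilityMeasure
  set A₁ := {ω : Config (G × ι) | (clusterIn f V₁ ω).Infinite}
  set A₂ := {ω : Config (G × ι) | (clusterIn f V₂ ω).Infinite}
  have hA₁ : MeasurableSet[coordSigma (edgesIn f V₁)] A₁ := measurableSet_clusterIn_infinite f V₁
  have hA₂ : MeasurableSet[coordSigma (edgesIn f V₂)] A₂ := measurableSet_clusterIn_infinite f V₂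
  have hunion : {ω | (cluster f ω).Infinite} = A₁ ∪ A₂ := by
    ext ω
    simp [A₁, A₂, cluster_eq_union_clusterIn f ω h₁ h₂ hV hedge, Set.infinite_union]
  have hinter : μ.real (A₁ ∩ A₂) = μ.real A₁ * μ.real A₂ := by
    simp only [measureReal_def, ← ENNReal.toReal_mul]
    rw [(Indep_iff _ _ μ).1 (hμ.indep_coordSigma (disjoint_edgesIn f hV)) _ _ hA₁ hA₂]
  have := measureReal_union_add_inter (μ := μ) (s := A₁) (coordSigma_le _ _ hA₂)
  rw [theta, ← measureReal_def, hunion]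
  linarith

end Splitting

section ReducedWords

variable {G₁ G₂ : Type*}

def headSide (l : List (G₁ ⊕ G₂)) : Option Bool := l.head?.map Sum.isLeft

theorem headSide_ne_of_forall {M : List (G₁ ⊕ G₂)} {i : Bool} (hM : ∀ m ∈ M, m.isLeft = i) :
    headSide M ≠ some !i := by
  cases M with
  | nil => simp [headSide]
  | cons m M => simp [headSide, hM m (by simp)]

theorem exists_headSide_append_ne (L : List (G₁ ⊕ G₂)) {M M' : List (G₁ ⊕ G₂)} {i : Bool}
    (hM : ∀ m ∈ M, m.isLeft = i) (hM' : ∀ m ∈ M', m.isLeft = i) :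
    ∃ c, headSide (L ++ M) ≠ some c ∧ headSide (L ++ M') ≠ some c := by
  cases L with
  | nil => exact ⟨!i, headSide_ne_of_forall hM, headSide_ne_of_forall hM'⟩
  | cons x L => exact ⟨!x.isLeft, by cases x <;> simp [headSide]⟩

variable [Group G₁] [Group G₂]

def syl : G₁ ⊕ G₂ → Coprod G₁ G₂ := Sum.elim Coprod.inl Coprod.inr

@[simp]
theorem sylProd_nil : sylProd ([] : List (G₁ ⊕ G₂)) = 1 := rfl

@[simp]
theorem sylProd_cons (a : G₁ ⊕ G₂) (l : List (G₁ ⊕ G₂)) :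
    sylProd (a :: l) = syl a * sylProd l := by
  cases a <;> rfl

@[simp]
theorem sylProd_append_singleton (l : List (G₁ ⊕ G₂)) (a : G₁ ⊕ G₂) :
    sylProd (l ++ [a]) = sylProd l * syl a := by
  induction l with
  | nil => simp
  | cons b l ih => simp [ih, mul_assoc]

def IsReduced (l : List (G₁ ⊕ G₂)) : Prop :=
  (∀ a ∈ l, a ≠ Sum.inl 1 ∧ a ≠ Sum.inr 1) ∧ l.IsChain (fun a b => a.isLeft ≠ b.isLeft)

theorem isReduced_nil : IsReduced ([] : List (G₁ ⊕ G₂)) := ⟨by simp, .nil⟩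

theorem isReduced_append_singleton {l : List (G₁ ⊕ G₂)} {a : G₁ ⊕ G₂} :
    IsReduced (l ++ [a]) ↔
      IsReduced l ∧ (a ≠ Sum.inl 1 ∧ a ≠ Sum.inr 1) ∧ ∀ b ∈ l.getLast?, b.isLeft ≠ a.isLeft := by
  simp only [IsReduced, List.mem_append, List.mem_singleton, List.isChain_append,
    List.isChain_singleton, List.head?_cons, Option.mem_some_iff, true_and]
  grind

theorem exists_syl_eq_mul {a b : G₁ ⊕ G₂} (h : a.isLeft = b.isLeft) :
    ∃ c : G₁ ⊕ G₂, c.isLeft = a.isLeft ∧ syl c = syl a * syl b := by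
  rcases a with s | s <;> rcases b with t | t <;> simp only [Sum.isLeft_inl, Sum.isLeft_inr,
    Bool.true_eq_false, Bool.false_eq_true] at h
  · exact ⟨.inl (s * t), rfl, map_mul Coprod.inl s t⟩
  · exact ⟨.inr (s * t), rfl, map_mul Coprod.inr s t⟩

theorem syl_eq_one {a : G₁ ⊕ G₂} (h : a = Sum.inl 1 ∨ a = Sum.inr 1) : syl a = 1 := by
  obtain rfl | rfl := h <;> simp [syl]

/-- Right multiplication by a syllable changes only the last syllable of a reduced word, so `l`
and the reduced form `l'` of `l * a` never begin on opposite sides. -/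
theorem IsReduced.exists_mul_syl {l : List (G₁ ⊕ G₂)} (hl : IsReduced l) (a : G₁ ⊕ G₂) :
    ∃ l', IsReduced l' ∧ sylProd l' = sylProd l * syl a ∧
      ∃ c, headSide l ≠ some c ∧ headSide l' ≠ some c := by
  by_cases ha : a = Sum.inl 1 ∨ a = Sum.inr 1
  · refine ⟨l, hl, by rw [syl_eq_one ha, mul_one], ?_⟩
    simpa using exists_headSide_append_ne l (M := []) (M' := []) (i := true) (by simp) (by simp)
  push Not at ha
  rcases l.eq_nil_or_concat' with rfl | ⟨L, b, rfl⟩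
  · exact ⟨[a], isReduced_append_singleton.2 ⟨isReduced_nil, ha, by simp⟩, by simp,
      exists_headSide_append_ne [] (M := []) (M' := [a]) (i := a.isLeft) (by simp) (by simp)⟩
  obtain ⟨hL, -, hlast⟩ := isReduced_append_singleton.1 hl
  by_cases hba : b.isLeft = a.isLeft
  · obtain ⟨c, hc, hbc⟩ := exists_syl_eq_mul hba
    have hprod : sylProd (L ++ [b]) * syl a = sylProd L * syl c := by
      rw [sylProd_append_singleton, mul_assoc, hbc]
    have hside (M' : List (G₁ ⊕ G₂)) (hM' : ∀ m ∈ M', m.isLeft = a.isLeft) :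
        ∃ c, headSide (L ++ [b]) ≠ some c ∧ headSide (L ++ M') ≠ some c :=
      exists_headSide_append_ne L (by simpa using hba) hM'
    by_cases hc1 : c = Sum.inl 1 ∨ c = Sum.inr 1
    · refine ⟨L, hL, by rw [hprod, syl_eq_one hc1, mul_one], ?_⟩
      simpa using hside [] (by simp)
    · push Not at hc1
      refine ⟨L ++ [c], isReduced_append_singleton.2 ⟨hL, hc1, fun x hx => hc ▸ hlast x hx⟩,
        by rw [hprod, sylProd_append_singleton], hside [c] (by simpa [hc] using hba)⟩
  · refine ⟨L ++ [b] ++ [a], isReduced_append_singleton.2 ⟨hl, ha, by simpa using hba⟩,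
      sylProd_append_singleton _ _, ?_⟩
    simpa using exists_headSide_append_ne (L ++ [b]) (M := []) (M' := [a]) (i := a.isLeft)
      (by simp) (by simp)

theorem exists_sylProd_eq (x : Coprod G₁ G₂) : ∃ l, sylProd l = x := by
  induction x using Coprod.induction_on' with
  | one => exact ⟨[], rfl⟩
  | inl_mul m x ih => obtain ⟨l, rfl⟩ := ih; exact ⟨.inl m :: l, rfl⟩
  | inr_mul n x ih => obtain ⟨l, rfl⟩ := ih; exact ⟨.inr n :: l, rfl⟩

theorem exists_isReduced (x : Coprod G₁ G₂) : ∃ l, IsReduced l ∧ sylProd l = x := by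
  obtain ⟨l, rfl⟩ := exists_sylProd_eq x
  induction l using List.reverseRecOn with
  | nil => exact ⟨[], isReduced_nil, rfl⟩
  | append_singleton L a ih =>
    obtain ⟨l, hl, hL⟩ := ih
    obtain ⟨l', hl', h, -⟩ := hl.exists_mul_syl a
    exact ⟨l', hl', by rw [h, hL, sylProd_append_singleton]⟩

end ReducedWords

section Uniqueness

universe u v

variable {G₁ : Type u} {G₂ : Type v}

/-- `G₁` and `G₂` as a `Bool`-indexed family in a common universe, so that the normal form
theorem for `CoprodI` applies. -/
def Fam (G₁ : Type u) (G₂ : Type v) (b : Bool) : Type max u v :=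
  cond b (ULift.{v} G₁) (ULift.{u} G₂)

def toLetter : G₁ ⊕ G₂ → Σ b, Fam G₁ G₂ b :=
  Sum.elim (fun g => ⟨true, ULift.up g⟩) (fun h => ⟨false, ULift.up h⟩)

theorem toLetter_injective : Function.Injective (toLetter (G₁ := G₁) (G₂ := G₂)) := by
  rintro (a | a) (b | b) h <;> cases h <;> rfl

variable [Group G₁] [Group G₂]

instance : ∀ b, Group (Fam G₁ G₂ b)
  | true => inferInstanceAs (Group (ULift G₁))
  | false => inferInstanceAs (Group (ULift G₂))

noncomputable def toCoprodI : Coprod G₁ G₂ →* CoprodI (Fam G₁ G₂) :=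
  Coprod.lift ((CoprodI.of (i := true)).comp MulEquiv.ulift.symm.toMonoidHom)
    ((CoprodI.of (i := false)).comp MulEquiv.ulift.symm.toMonoidHom)

theorem toCoprodI_syl (a : G₁ ⊕ G₂) : toCoprodI (syl a) = CoprodI.of (toLetter a).2 := by
  cases a <;> rfl

theorem toCoprodI_sylProd (l : List (G₁ ⊕ G₂)) :
    toCoprodI (sylProd l) = (l.map fun a => CoprodI.of (toLetter a).2).prod := by
  induction l with
  | nil => exact map_one _
  | cons a l ih => rw [sylProd_cons, map_mul, ih, toCoprodI_syl, List.map_cons, List.prod_cons]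

theorem IsReduced.exists_word {l : List (G₁ ⊕ G₂)} (hl : IsReduced l) :
    ∃ w : CoprodI.Word (Fam G₁ G₂), w.toList = l.map toLetter ∧
      w.prod = toCoprodI (sylProd l) := by
  refine ⟨⟨l.map toLetter, ?_, ?_⟩, rfl, ?_⟩
  · simp only [List.mem_map, forall_exists_index, and_imp, forall_apply_eq_imp_iff₂]
    rintro (g | g) hg h1
    · exact (hl.1 _ hg).1 (congrArg Sum.inl (congrArg ULift.down h1))
    · exact (hl.1 _ hg).2 (congrArg Sum.inr (congrArg ULift.down h1))
  · rw [List.isChain_map]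
    exact hl.2.imp fun a b hab => by cases a <;> cases b <;> simp_all [toLetter]
  · rw [toCoprodI_sylProd, CoprodI.Word.prod, List.map_map]
    rfl

theorem IsReduced.eq_of_sylProd_eq {l l' : List (G₁ ⊕ G₂)} (hl : IsReduced l)
    (hl' : IsReduced l') (h : sylProd l = sylProd l') : l = l' := by
  classical
  obtain ⟨w, hw, hwp⟩ := hl.exists_word
  obtain ⟨w', hw', hwp'⟩ := hl'.exists_word
  have hww' : w = w' :=
    CoprodI.Word.equiv.symm.injective (show w.prod = w'.prod by rw [hwp, hwp', h])
  exact (List.map_injective_iff.2 toLetter_injective) (hw ▸ hw' ▸ congrArg _ hww')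

end Uniqueness

section Halves

variable {G₁ G₂ : Type*} [Group G₁] [Group G₂]

/-- `headedBy true` is `P₁` and `headedBy false` is `P₂`. -/
def headedBy (b : Bool) : Set (Coprod G₁ G₂) :=
  {x | ∃ l, IsReduced l ∧ sylProd l = x ∧ headSide l = some b}

theorem setOf_beginsLeft : {x : Coprod G₁ G₂ | beginsLeft x} = headedBy true := by
  ext x
  constructor
  · rintro ⟨l, -, hnt, hch, ⟨g, hg⟩, rfl⟩
    exact ⟨l, ⟨hnt, hch⟩, rfl, by simp [headSide, hg]⟩
  · rintro ⟨_ | ⟨a, l⟩, hl, rfl, hs⟩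
    · simp [headSide] at hs
    · rcases a with g | h
      · exact ⟨_, List.cons_ne_nil _ _, hl.1, hl.2, ⟨g, rfl⟩, rfl⟩
      · simp [headSide] at hs

theorem setOf_beginsRight : {x : Coprod G₁ G₂ | beginsRight x} = headedBy false := by
  ext x
  constructor
  · rintro ⟨l, -, hnt, hch, ⟨g, hg⟩, rfl⟩
    exact ⟨l, ⟨hnt, hch⟩, rfl, by simp [headSide, hg]⟩
  · rintro ⟨_ | ⟨a, l⟩, hl, rfl, hs⟩
    · simp [headSide] at hs
    · rcases a with g | h
      · simp [headSide] at hs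
      · exact ⟨_, List.cons_ne_nil _ _, hl.1, hl.2, ⟨h, rfl⟩, rfl⟩

theorem insert_one_headedBy_inter_subset :
    insert 1 (headedBy true) ∩ insert 1 (headedBy false) ⊆ ({1} : Set (Coprod G₁ G₂)) := by
  rintro x ⟨hx | ⟨l, hl, rfl, hs⟩, hx' | ⟨l', hl', hll', hs'⟩⟩
  · exact hx
  · exact hx
  · exact hx'
  · rw [hl.eq_of_sylProd_eq hl' hll'.symm, hs'] at hs
    exact absurd hs (by simp)

theorem sylProd_mem_insert_one_headedBy {l : List (G₁ ⊕ G₂)} (hl : IsReduced l) {c : Bool}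
    (hc : headSide l ≠ some c) : sylProd l ∈ insert 1 (headedBy !c) := by
  rcases l with _ | ⟨a, l⟩
  · exact Set.mem_insert _ _
  · refine Or.inr ⟨_, hl, rfl, ?_⟩
    simpa [headSide, Bool.eq_not] using hc

theorem exists_mem_insert_one_headedBy_mul_syl (x : Coprod G₁ G₂) (a : G₁ ⊕ G₂) :
    ∃ b, x ∈ insert 1 (headedBy b) ∧ x * syl a ∈ insert 1 (headedBy b) := by
  obtain ⟨l, hl, rfl⟩ := exists_isReduced x
  obtain ⟨l', hl', hprod, c, hc, hc'⟩ := hl.exists_mul_syl a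
  exact ⟨!c, sylProd_mem_insert_one_headedBy hl hc,
    hprod ▸ sylProd_mem_insert_one_headedBy hl' hc'⟩

theorem coprodGens_eq_syl (S₁ : Set G₁) (S₂ : Set G₂) (i : S₁ ⊕ S₂) :
    coprodGens S₁ S₂ i = syl (i.map Subtype.val Subtype.val) := by
  cases i <;> rfl

end Halves

end Perc

theorem percolation_function_from_AB_general
    {G₁ G₂ : Type*} [Group G₁] [Group G₂]
    (S₁ : Set G₁) (S₂ : Set G₂) (hfin₁ : S₁.Finite) (hfin₂ : S₂.Finite)
    (μ : ℝ → Measure (Config (Monoid.Coprod G₁ G₂ × (S₁ ⊕ S₂))))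
    (hμ : ∀ p ∈ Set.Icc (0 : ℝ) 1, IsBernoulli p (μ p))
    (p : ℝ) (hp : p ∈ Set.Icc (0 : ℝ) 1) :
    theta (coprodGens S₁ S₂) (μ p)
      = (μ p {ω | (clusterIn (coprodGens S₁ S₂) (insert 1 {x | beginsLeft x}) ω).Infinite}).toReal
        + (μ p {ω | (clusterIn (coprodGens S₁ S₂) (insert 1 {x | beginsRight x}) ω).Infinite}).toReal
        - (μ p {ω | (clusterIn (coprodGens S₁ S₂) (insert 1 {x | beginsLeft x}) ω).Infinite}).toReal
          * (μ p {ω | (clusterIn (coprodGens S₁ S₂) (insert 1 {x | beginsRight x}) ω).Infinite}).toReal := by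
  have := hfin₁.to_subtype
  have := hfin₂.to_subtype
  rw [setOf_beginsLeft, setOf_beginsRight]
  refine theta_eq_of_split _ (hμ p hp) (Set.mem_insert 1 _) (Set.mem_insert 1 _)
    insert_one_headedBy_inter_subset fun a i => ?_
  rw [coprodGens_eq_syl]
  obtain ⟨_ | _, h⟩ := exists_mem_insert_one_headedBy_mul_syl a (i.map Subtype.val Subtype.val)
  exacts [Or.inr h, Or.inl h]

/-- In the Cayley graph of `G₁ * G₂` (w.r.t. `S₁ ⊔ S₂`), let `A(p)`
(resp. `B(p)`) be the probability that the cluster of the identity in the subgraph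
induced on `{e} ∪ P₁` (resp. `{e} ∪ P₂`) is infinite, where `Pᵢ` is the set of
nontrivial elements whose normal form begins with a nontrivial syllable of `Gᵢ`.  Then
for every `p ∈ [0,1]` the percolation function satisfies
`θ(p) = A(p) + B(p) - A(p)·B(p)`. -/
theorem percolation_function_from_AB
    {G₁ G₂ : Type*} [Group G₁] [Group G₂] [Nontrivial G₁] [Nontrivial G₂]
    (S₁ : Set G₁) (S₂ : Set G₂) (hfin₁ : S₁.Finite) (hfin₂ : S₂.Finite)
    (hgen₁ : Subgroup.closure S₁ = ⊤) (hgen₂ : Subgroup.closure S₂ = ⊤)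
    (μ : ℝ → Measure (Config (Monoid.Coprod G₁ G₂ × (S₁ ⊕ S₂))))
    (hμ : ∀ p ∈ Set.Icc (0 : ℝ) 1, IsBernoulli p (μ p))
    (p : ℝ) (hp : p ∈ Set.Icc (0 : ℝ) 1) :
    theta (coprodGens S₁ S₂) (μ p)
      = (μ p {ω | (clusterIn (coprodGens S₁ S₂) (insert 1 {x | beginsLeft x}) ω).Infinite}).toReal
        + (μ p {ω | (clusterIn (coprodGens S₁ S₂) (insert 1 {x | beginsRight x}) ω).Infinite}).toReal
        - (μ p {ω | (clusterIn (coprodGens S₁ S₂) (insert 1 {x | beginsLeft x}) ω).Infinite}).toReal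
          * (μ p {ω | (clusterIn (coprodGens S₁ S₂) (insert 1 {x | beginsRight x}) ω).Infinite}).toReal :=
  percolation_function_from_AB_general S₁ S₂ hfin₁ hfin₂ μ hμ p hp
end

section
/- Let m ≥ 2 and consider Bernoulli bond percolation on the Cayley graph of the cyclic group ℤ/mℤ with generating set {1} (the m-cycle). Then for every p with 0 ≤ p < 1, the expected cluster size of the identity equals (1 + p − m·(p^m − p^{m+1}) − p^m − p^{m+1}) / (1 − p). -/
open MeasureTheory ENNReal

open Perc

namespace CycleAux

open Perc Multiplicative

variable {m : ℕ}

/-- The unique generator index. -/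
def gen (m : ℕ) : ({Multiplicative.ofAdd (1 : ZMod m)} : Set (Multiplicative (ZMod m))) :=
  ⟨Multiplicative.ofAdd 1, rfl⟩

/-- The edge at vertex `a`. -/
def ed (m : ℕ) (a : ZMod m) :
    Multiplicative (ZMod m) ×
      ({Multiplicative.ofAdd (1 : ZMod m)} : Set (Multiplicative (ZMod m))) :=
  (Multiplicative.ofAdd a, gen m)

lemma gen_unique (i : ({Multiplicative.ofAdd (1 : ZMod m)} : Set (Multiplicative (ZMod m)))) :
    i = gen m := Subtype.ext i.2

lemma ed_injective : Function.Injective (ed m) := by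
  intro a b h
  simpa [ed, Prod.ext_iff] using h

lemma step_iff (ω : Config (Multiplicative (ZMod m) ×
      ({Multiplicative.ofAdd (1 : ZMod m)} : Set (Multiplicative (ZMod m)))))
    (a b : Multiplicative (ZMod m)) :
    Step (setGens ({Multiplicative.ofAdd (1 : ZMod m)} : Set (Multiplicative (ZMod m)))) ω a b ↔
      (ω (ed m (toAdd a)) = true ∧ b = a * Multiplicative.ofAdd 1) ∨
      (ω (ed m (toAdd b)) = true ∧ a = b * Multiplicative.ofAdd 1) := by
  constructor
  · rintro ⟨i, h⟩
    rw [gen_unique i] at h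
    simpa [ed, setGens, gen] using h
  · intro h
    exact ⟨gen m, by simpa [ed, setGens, gen] using h⟩

/-- Forward arc from 0 to x is open. -/
def FO (ω : Config (Multiplicative (ZMod m) ×
      ({Multiplicative.ofAdd (1 : ZMod m)} : Set (Multiplicative (ZMod m)))))
    (x : ZMod m) : Prop :=
  ∀ j : ZMod m, j.val < x.val → ω (ed m j) = true

/-- Backward arc from 0 to x is open. -/
def BO (ω : Config (Multiplicative (ZMod m) ×
      ({Multiplicative.ofAdd (1 : ZMod m)} : Set (Multiplicative (ZMod m)))))
    (x : ZMod m) : Prop :=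
  ∀ j : ZMod m, x.val ≤ j.val → ω (ed m j) = true

lemma val_add_one [NeZero m] (hm : 2 ≤ m) (d : ZMod m) :
    (d + 1).val = (d.val + 1) % m := by
  haveI : Fact (1 < m) := ⟨by omega⟩
  rw [ZMod.val_add, ZMod.val_one]

section

variable [NeZero m]
  (ω : Config (Multiplicative (ZMod m) ×
      ({Multiplicative.ofAdd (1 : ZMod m)} : Set (Multiplicative (ZMod m)))))

lemma val_inj {a b : ZMod m} (h : a.val = b.val) : a = b := ZMod.val_injective m h

lemma move_up (hm : 2 ≤ m) {d : ZMod m} (h : FO ω d ∨ BO ω d)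
    (ho : ω (ed m d) = true) : FO ω (d + 1) ∨ BO ω (d + 1) := by
  have hv : (d + 1).val = (d.val + 1) % m := val_add_one hm d
  rcases Nat.lt_or_ge (d.val + 1) m with hlt | hge
  · rw [Nat.mod_eq_of_lt hlt] at hv
    rcases h with hF | hB
    · left
      intro j hj
      rw [hv] at hj
      rcases Nat.lt_or_ge j.val d.val with h' | h'
      · exact hF j h'
      · have : j = d := val_inj (by omega)
        rwa [this]
    · right
      intro j hj
      exact hB j (by omega)
  · have hm' : d.val + 1 = m := by have := ZMod.val_lt d; omega
    left
    intro j hj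
    rw [hv, hm', Nat.mod_self] at hj
    omega

lemma move_down (hm : 2 ≤ m) {e : ZMod m} (h : FO ω (e + 1) ∨ BO ω (e + 1))
    (ho : ω (ed m e) = true) : FO ω e ∨ BO ω e := by
  have hv : (e + 1).val = (e.val + 1) % m := val_add_one hm e
  rcases Nat.lt_or_ge (e.val + 1) m with hlt | hge
  · rw [Nat.mod_eq_of_lt hlt] at hv
    rcases h with hF | hB
    · left
      intro j hj
      exact hF j (by omega)
    · right
      intro j hj
      rcases Nat.lt_or_ge j.val (e.val + 1) with h' | h'
      · have : j = e := val_inj (by omega)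
        rwa [this]
      · exact hB j (by omega)
  · right
    intro j hj
    have hjl := ZMod.val_lt j
    have hel := ZMod.val_lt e
    have : j = e := val_inj (by omega)
    rwa [this]

lemma fo_conn (hm : 2 ≤ m) :
    ∀ (n : ℕ) (x : ZMod m), x.val ≤ n → FO ω x →
      Conn (setGens ({Multiplicative.ofAdd (1 : ZMod m)} :
        Set (Multiplicative (ZMod m)))) ω 1 (Multiplicative.ofAdd x)
  | 0, x, hx, _ => by
      have hx0 : x = 0 := (ZMod.val_eq_zero x).1 (Nat.le_zero.mp hx)
      subst hx0
      exact Relation.ReflTransGen.refl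
  | n + 1, x, hx, hFO => by
      by_cases h0 : x = 0
      · subst h0; exact Relation.ReflTransGen.refl
      · have hxv : x.val ≠ 0 := fun h => h0 ((ZMod.val_eq_zero x).1 h)
        set y := x - 1 with hy
        have hyx : y + 1 = x := sub_add_cancel x 1
        have hv : x.val = (y.val + 1) % m := by rw [← hyx, val_add_one hm]
        have hyl := ZMod.val_lt y
        have hxy : x.val = y.val + 1 := by
          rcases Nat.lt_or_ge (y.val + 1) m with hlt | hge
          · rwa [Nat.mod_eq_of_lt hlt] at hv
          · have : y.val + 1 = m := by omega
            rw [this, Nat.mod_self] at hv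
            omega
        have hconn := fo_conn hm n y (by omega) (fun j hj => hFO j (by omega))
        refine hconn.tail ?_
        rw [step_iff]
        left
        refine ⟨?_, ?_⟩
        · have : ω (ed m y) = true := hFO y (by omega)
          simpa using this
        · rw [← hyx, ← ofAdd_add]

lemma bo_conn (hm : 2 ≤ m) :
    ∀ (n : ℕ) (x : ZMod m), m ≤ x.val + n → BO ω x →
      Conn (setGens ({Multiplicative.ofAdd (1 : ZMod m)} :
        Set (Multiplicative (ZMod m)))) ω 1 (Multiplicative.ofAdd x)
  | 0, x, hx, _ => by
      have := ZMod.val_lt x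
      omega
  | n + 1, x, hx, hBO => by
      by_cases h0 : x = 0
      · subst h0; exact Relation.ReflTransGen.refl
      · set y := x + 1 with hy
        have hv : y.val = (x.val + 1) % m := val_add_one hm x
        have hstep : Step (setGens ({Multiplicative.ofAdd (1 : ZMod m)} :
            Set (Multiplicative (ZMod m)))) ω (Multiplicative.ofAdd y) (Multiplicative.ofAdd x) := by
          rw [step_iff]
          right
          refine ⟨?_, ?_⟩
          · have : ω (ed m x) = true := hBO x le_rfl
            simpa using this
          · rw [hy, ← ofAdd_add]
        have hconn : Conn (setGens ({Multiplicative.ofAdd (1 : ZMod m)} :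
            Set (Multiplicative (ZMod m)))) ω 1 (Multiplicative.ofAdd y) := by
          rcases Nat.lt_or_ge (x.val + 1) m with hlt | hge
          · rw [Nat.mod_eq_of_lt hlt] at hv
            exact bo_conn hm n y (by omega) (fun j hj => hBO j (by omega))
          · have hxl := ZMod.val_lt x
            have : x.val + 1 = m := by omega
            rw [this, Nat.mod_self] at hv
            have : y = 0 := (ZMod.val_eq_zero y).1 hv
            rw [this]
            exact Relation.ReflTransGen.refl
        exact hconn.tail hstep

lemma conn_iff (hm : 2 ≤ m) (x : ZMod m) :
    Conn (setGens ({Multiplicative.ofAdd (1 : ZMod m)} : Set (Multiplicative (ZMod m)))) ω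
      1 (Multiplicative.ofAdd x) ↔ FO ω x ∨ BO ω x := by
  constructor
  · intro h
    have key : ∀ g : Multiplicative (ZMod m),
        Conn (setGens ({Multiplicative.ofAdd (1 : ZMod m)} :
          Set (Multiplicative (ZMod m)))) ω 1 g →
        FO ω (Multiplicative.toAdd g) ∨ BO ω (Multiplicative.toAdd g) := by
      intro g hg
      induction hg with
      | refl =>
          left
          intro j hj
          simp [ZMod.val_zero] at hj
      | tail _ hstep ih =>
          rename_i b c _
          rw [step_iff] at hstep
          rcases hstep with ⟨ho, hc⟩ | ⟨ho, hb⟩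
          · have : Multiplicative.toAdd c = Multiplicative.toAdd b + 1 := by
              rw [hc]; simp
            rw [this]
            exact move_up ω hm ih ho
          · have hbc : Multiplicative.toAdd b = Multiplicative.toAdd c + 1 := by
              rw [hb]; simp
            rw [hbc] at ih
            exact move_down ω hm ih ho
    simpa using key (Multiplicative.ofAdd x) h
  · rintro (hF | hB)
    · exact fo_conn ω hm x.val x le_rfl hF
    · exact bo_conn ω hm m x (by omega) hB

end


section Measure

variable [NeZero m]
  {μ : Measure (Config (Multiplicative (ZMod m) ×
      ({Multiplicative.ofAdd (1 : ZMod m)} : Set (Multiplicative (ZMod m)))))}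
  {p : ℝ}

lemma cyl_eq (A : Finset (ZMod m)) :
    {ω : Config (Multiplicative (ZMod m) ×
      ({Multiplicative.ofAdd (1 : ZMod m)} : Set (Multiplicative (ZMod m)))) |
      ∀ e ∈ A.image (ed m), ω e = true} = {ω | ∀ j ∈ A, ω (ed m j) = true} := by
  ext ω
  simp only [Set.mem_setOf_eq, Finset.mem_image]
  constructor
  · intro h j hj
    exact h _ ⟨j, hj, rfl⟩
  · rintro h e ⟨j, hj, rfl⟩
    exact h j hj

lemma mu_cyl (hμ : IsBernoulli p μ) (hp0 : 0 ≤ p) (A : Finset (ZMod m)) :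
    μ {ω | ∀ j ∈ A, ω (ed m j) = true} = ENNReal.ofReal (p ^ A.card) := by
  rw [← cyl_eq, hμ (A.image (ed m)) (fun _ => true)]
  simp only [if_true, Finset.prod_const, Finset.card_image_of_injective _ ed_injective]
  rw [ENNReal.ofReal_pow hp0]

lemma meas_cyl (A : Finset (ZMod m)) :
    MeasurableSet {ω : Config (Multiplicative (ZMod m) ×
      ({Multiplicative.ofAdd (1 : ZMod m)} : Set (Multiplicative (ZMod m)))) |
      ∀ j ∈ A, ω (ed m j) = true} := by
  have : {ω : Config (Multiplicative (ZMod m) ×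
      ({Multiplicative.ofAdd (1 : ZMod m)} : Set (Multiplicative (ZMod m)))) |
      ∀ j ∈ A, ω (ed m j) = true} =
      ⋂ (j : ZMod m) (_ : j ∈ A), (fun ω => ω (ed m j)) ⁻¹' {true} := by
    ext ω; simp [Set.mem_iInter]
  rw [this]
  exact MeasurableSet.iInter fun j => MeasurableSet.iInter fun _ =>
    measurable_pi_apply (ed m j) (measurableSet_singleton true)

open Finset in
/-- The forward arc as a finset. -/
def arcF (x : ZMod m) : Finset (ZMod m) := Finset.univ.filter (fun j => j.val < x.val)

open Finset in
/-- The backward arc as a finset. -/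
def arcB (x : ZMod m) : Finset (ZMod m) := Finset.univ.filter (fun j => x.val ≤ j.val)

lemma card_arcF (x : ZMod m) : (arcF x).card = x.val := by
  rw [arcF, ← Finset.card_range x.val]
  refine Finset.card_bij' (fun j _ => j.val) (fun k _ => (k : ZMod m)) ?_ ?_ ?_ ?_
  · intro a ha
    simp only [Finset.mem_filter] at ha
    simpa using ha.2
  · intro k hk
    simp only [Finset.mem_range] at hk
    have hkm : k < m := lt_of_lt_of_le hk (le_of_lt (ZMod.val_lt x))
    simp [Finset.mem_filter, ZMod.val_cast_of_lt hkm, hk]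
  · intro a _
    exact ZMod.natCast_rightInverse a
  · intro k hk
    simp only [Finset.mem_range] at hk
    have hkm : k < m := lt_of_lt_of_le hk (le_of_lt (ZMod.val_lt x))
    exact ZMod.val_cast_of_lt hkm

lemma card_arcB (x : ZMod m) : (arcB x).card = m - x.val := by
  have htot := Finset.card_filter_add_card_filter_not
    (s := (Finset.univ : Finset (ZMod m))) (p := fun j => j.val < x.val)
  have hcard : (Finset.univ : Finset (ZMod m)).card = m := by
    simpa using ZMod.card m
  have hB : arcB x = Finset.univ.filter (fun j => ¬ j.val < x.val) := by
    apply Finset.filter_congr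
    intro j _
    simp [not_lt]
  have hF := card_arcF x
  rw [arcF] at hF
  rw [hB]
  have hx := ZMod.val_lt x
  omega

lemma union_conn (hm : 2 ≤ m)
    (ω : Config (Multiplicative (ZMod m) ×
      ({Multiplicative.ofAdd (1 : ZMod m)} : Set (Multiplicative (ZMod m)))))
    (x : ZMod m) :
    Conn (setGens ({Multiplicative.ofAdd (1 : ZMod m)} : Set (Multiplicative (ZMod m)))) ω
      1 (Multiplicative.ofAdd x) ↔
      ((∀ j ∈ arcF x, ω (ed m j) = true) ∨ (∀ j ∈ arcB x, ω (ed m j) = true)) := by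
  rw [conn_iff ω hm x]
  unfold FO BO arcF arcB
  simp

lemma conn_event_eq (hm : 2 ≤ m) (x : ZMod m) :
    {ω : Config (Multiplicative (ZMod m) ×
      ({Multiplicative.ofAdd (1 : ZMod m)} : Set (Multiplicative (ZMod m)))) |
      Conn (setGens ({Multiplicative.ofAdd (1 : ZMod m)} : Set (Multiplicative (ZMod m)))) ω
        1 (Multiplicative.ofAdd x)} =
      {ω | ∀ j ∈ arcF x, ω (ed m j) = true} ∪ {ω | ∀ j ∈ arcB x, ω (ed m j) = true} := by
  ext ω
  simp only [Set.mem_setOf_eq, Set.mem_union]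
  exact union_conn hm ω x

lemma inter_event_eq (x : ZMod m) :
    ({ω : Config (Multiplicative (ZMod m) ×
      ({Multiplicative.ofAdd (1 : ZMod m)} : Set (Multiplicative (ZMod m)))) |
      ∀ j ∈ arcF x, ω (ed m j) = true} ∩ {ω | ∀ j ∈ arcB x, ω (ed m j) = true}) =
      {ω | ∀ j ∈ (Finset.univ : Finset (ZMod m)), ω (ed m j) = true} := by
  ext ω
  simp only [Set.mem_inter_iff, Set.mem_setOf_eq, Finset.mem_univ, arcF, arcB,
    Finset.mem_filter, true_and]
  constructor
  · rintro ⟨hF, hB⟩ j _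
    rcases Nat.lt_or_ge j.val x.val with h | h
    · exact hF j h
    · exact hB j h
  · intro h
    exact ⟨fun j _ => h j trivial, fun j _ => h j trivial⟩

lemma meas_conn (hm : 2 ≤ m) (x : Multiplicative (ZMod m)) :
    MeasurableSet {ω : Config (Multiplicative (ZMod m) ×
      ({Multiplicative.ofAdd (1 : ZMod m)} : Set (Multiplicative (ZMod m)))) |
      Conn (setGens ({Multiplicative.ofAdd (1 : ZMod m)} : Set (Multiplicative (ZMod m)))) ω
        1 x} := by
  have : x = Multiplicative.ofAdd (Multiplicative.toAdd x) := rfl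
  rw [this, conn_event_eq hm]
  exact (meas_cyl _).union (meas_cyl _)

lemma mu_conn (hμ : IsBernoulli p μ) (hm : 2 ≤ m) (hp0 : 0 ≤ p) (hp1 : p ≤ 1) (x : ZMod m) :
    μ {ω | Conn (setGens ({Multiplicative.ofAdd (1 : ZMod m)} :
        Set (Multiplicative (ZMod m)))) ω 1 (Multiplicative.ofAdd x)} =
      ENNReal.ofReal (p ^ x.val + p ^ (m - x.val) - p ^ m) := by
  rw [conn_event_eq hm]
  have hU := mu_cyl hμ hp0 (arcF x)
  have hV := mu_cyl hμ hp0 (arcB x)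
  have hI : μ ({ω | ∀ j ∈ arcF x, ω (ed m j) = true} ∩
      {ω | ∀ j ∈ arcB x, ω (ed m j) = true}) = ENNReal.ofReal (p ^ m) := by
    rw [inter_event_eq, mu_cyl hμ hp0]
    congr 1
    congr 1
    simpa using ZMod.card m
  have key := measure_union_add_inter (μ := μ)
    {ω | ∀ j ∈ arcF x, ω (ed m j) = true} (meas_cyl (arcB x))
  rw [hI, hU, hV, card_arcF, card_arcB] at key
  have hq0 : 0 ≤ p ^ x.val + p ^ (m - x.val) - p ^ m := by
    have h1 : p ^ m ≤ p ^ x.val :=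
      pow_le_pow_of_le_one hp0 hp1 (le_of_lt (ZMod.val_lt x))
    have h2 : 0 ≤ p ^ (m - x.val) := pow_nonneg hp0 _
    linarith
  rw [← ENNReal.add_left_inj (a := ENNReal.ofReal (p ^ m)) ENNReal.ofReal_ne_top, key,
    ← ENNReal.ofReal_add hq0 (pow_nonneg hp0 m)]
  rw [← ENNReal.ofReal_add (pow_nonneg hp0 _) (pow_nonneg hp0 _)]
  congr 1
  ring

end Measure


section Final

open scoped Classical

variable [NeZero m]

lemma encard_cluster (ω : Config (Multiplicative (ZMod m) ×
      ({Multiplicative.ofAdd (1 : ZMod m)} : Set (Multiplicative (ZMod m))))) :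
    ((cluster (setGens ({Multiplicative.ofAdd (1 : ZMod m)} :
        Set (Multiplicative (ZMod m)))) ω).encard : ℝ≥0∞) =
      ∑ x : Multiplicative (ZMod m),
        (if Conn (setGens ({Multiplicative.ofAdd (1 : ZMod m)} :
          Set (Multiplicative (ZMod m)))) ω 1 x then (1 : ℝ≥0∞) else 0) := by
  classical
  have hs : cluster (setGens ({Multiplicative.ofAdd (1 : ZMod m)} :
      Set (Multiplicative (ZMod m)))) ω =
      ↑(Finset.univ.filter (fun x => Conn (setGens ({Multiplicative.ofAdd (1 : ZMod m)} :
        Set (Multiplicative (ZMod m)))) ω 1 x)) := by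
    ext x
    simp [cluster]
  rw [hs, Set.encard_coe_eq_coe_finsetCard, Finset.card_filter]
  rw [ENat.toENNReal_coe, Nat.cast_sum]
  simp [apply_ite (Nat.cast : ℕ → ℝ≥0∞)]

lemma chi_eq_sum (hm : 2 ≤ m)
    (μ : Measure (Config (Multiplicative (ZMod m) ×
      ({Multiplicative.ofAdd (1 : ZMod m)} : Set (Multiplicative (ZMod m)))))) :
    chi (setGens ({Multiplicative.ofAdd (1 : ZMod m)} : Set (Multiplicative (ZMod m)))) μ =
      ∑ x : Multiplicative (ZMod m),
        μ {ω | Conn (setGens ({Multiplicative.ofAdd (1 : ZMod m)} :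
          Set (Multiplicative (ZMod m)))) ω 1 x} := by
  classical
  rw [chi]
  rw [lintegral_congr (fun ω => encard_cluster ω)]
  rw [lintegral_finset_sum _ (fun x _ =>
    Measurable.ite (meas_conn hm x) measurable_const measurable_const)]
  apply Finset.sum_congr rfl
  intro x _
  have heq : (fun ω => if Conn (setGens ({Multiplicative.ofAdd (1 : ZMod m)} :
      Set (Multiplicative (ZMod m)))) ω 1 x then (1 : ℝ≥0∞) else 0) =
      Set.indicator {ω | Conn (setGens ({Multiplicative.ofAdd (1 : ZMod m)} :
        Set (Multiplicative (ZMod m)))) ω 1 x} (fun _ => 1) := by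
    funext ω
    rw [Set.indicator_apply]
    simp
  rw [heq]
  exact lintegral_indicator_one (meas_conn hm x)

lemma real_sum (hm : 2 ≤ m) {p : ℝ} (hp1 : p < 1) :
    ∑ k ∈ Finset.range m, (p ^ k + p ^ (m - k) - p ^ m) =
      (1 + p - (m : ℝ) * (p ^ m - p ^ (m + 1)) - p ^ m - p ^ (m + 1)) / (1 - p) := by
  have hp : p ≠ 1 := ne_of_lt hp1
  have hp1' : (1 : ℝ) - p ≠ 0 := by
    intro h; apply hp; linarith
  have hp1'' : p - 1 ≠ 0 := by
    intro h; apply hp; linarith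
  have hgeom : ∑ k ∈ Finset.range m, p ^ k = (p ^ m - 1) / (p - 1) := geom_sum_eq hp m
  have hrefl : ∑ k ∈ Finset.range m, p ^ (m - k) = (∑ k ∈ Finset.range m, p ^ k) * p := by
    rw [← Finset.sum_range_reflect, Finset.sum_mul]
    apply Finset.sum_congr rfl
    intro j hj
    rw [Finset.mem_range] at hj
    have : m - (m - 1 - j) = j + 1 := by omega
    rw [this, pow_succ]
  have hconst : ∑ _k ∈ Finset.range m, p ^ m = (m : ℝ) * p ^ m := by
    rw [Finset.sum_const, Finset.card_range, nsmul_eq_mul]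
  rw [Finset.sum_sub_distrib, Finset.sum_add_distrib, hgeom, hrefl, hgeom, hconst]
  rw [pow_succ]
  field_simp
  ring

end Final

end CycleAux


/-- On the Cayley graph of the cyclic group of order `m ≥ 2` (written
multiplicatively as `Multiplicative (ZMod m)`) with generating set `{1}` (the `m`-cycle),
for `0 ≤ p < 1` the expected cluster size of the identity equals
`(1 + p - m(p^m - p^{m+1}) - p^m - p^{m+1}) / (1 - p)`. -/
theorem expected_cluster_size_cycle
    (m : ℕ) (hm : 2 ≤ m) (p : ℝ) (hp0 : 0 ≤ p) (hp1 : p < 1)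
    (μ : Measure (Config (Multiplicative (ZMod m) ×
      ({Multiplicative.ofAdd (1 : ZMod m)} : Set (Multiplicative (ZMod m))))))
    (hμ : IsBernoulli p μ) :
    chi (setGens ({Multiplicative.ofAdd (1 : ZMod m)} : Set (Multiplicative (ZMod m)))) μ
      = ENNReal.ofReal
          ((1 + p - (m : ℝ) * (p ^ m - p ^ (m + 1)) - p ^ m - p ^ (m + 1)) / (1 - p)) := by
  haveI : NeZero m := ⟨by omega⟩
  rw [CycleAux.chi_eq_sum hm μ]
  have hsum := Fintype.sum_equiv (Multiplicative.ofAdd (α := ZMod m))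
    (fun d : ZMod m => μ {ω | Conn (setGens ({Multiplicative.ofAdd (1 : ZMod m)} :
       Set (Multiplicative (ZMod m)))) ω 1 (Multiplicative.ofAdd d)})
    (fun x : Multiplicative (ZMod m) => μ {ω | Conn (setGens
      ({Multiplicative.ofAdd (1 : ZMod m)} :
       Set (Multiplicative (ZMod m)))) ω 1 x}) (fun d => rfl)
  rw [← hsum]
  have hterm : ∀ d : ZMod m, μ {ω | Conn (setGens ({Multiplicative.ofAdd (1 : ZMod m)} :
      Set (Multiplicative (ZMod m)))) ω 1 (Multiplicative.ofAdd d)} =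
      ENNReal.ofReal (p ^ d.val + p ^ (m - d.val) - p ^ m) :=
    fun d => CycleAux.mu_conn hμ hm hp0 hp1.le d
  rw [Finset.sum_congr rfl (fun d _ => hterm d)]
  have hnn : ∀ d : ZMod m, d ∈ (Finset.univ : Finset (ZMod m)) →
      0 ≤ p ^ d.val + p ^ (m - d.val) - p ^ m := by
    intro d _
    have h1 : p ^ m ≤ p ^ d.val :=
      pow_le_pow_of_le_one hp0 hp1.le (le_of_lt (ZMod.val_lt d))
    have h2 : 0 ≤ p ^ (m - d.val) := pow_nonneg hp0 _
    linarith
  rw [← ENNReal.ofReal_sum_of_nonneg hnn]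
  congr 1
  rw [← CycleAux.real_sum hm hp1]
  refine Finset.sum_bij' (fun (d : ZMod m) _ => d.val) (fun k _ => (k : ZMod m))
    ?_ ?_ ?_ ?_ ?_
  · intro d _
    simpa [Finset.mem_range] using ZMod.val_lt d
  · intro k _
    exact Finset.mem_univ _
  · intro d _
    exact ZMod.natCast_rightInverse d
  · intro k hk
    rw [Finset.mem_range] at hk
    exact ZMod.val_cast_of_lt hk
  · intro d _
    rfl
end
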